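/- arXiv:1812.09752 — 7 statements merged into one kernel-verified Lean document; each statement's English description precedes it below -/
import Mathlib

section
/- For all integers n ≥ 1, q ≥ 2 and every positive integer l with l ≤ 2^{−q/(q−1)} · (1/(1 − q!/q^q))^{n/(q−1)}, there exists an n × l matrix with entries in [q] that is q-saturated. -/
/-- An `n × l` matrix with entries in `[q]` (formalized as `Fin q`) is `t`-saturated if for
every set `T` of `t` columns there is a row whose restriction to `T` attains all `q` values. -/
def Saturated {n l q : ℕ} (M : Matrix (Fin n) (Fin l) (Fin q)) (t : ℕ) : Prop :=
  ∀ T : Finset (Fin l), T.card = t → ∃ r : Fin n, ∀ c : Fin q, ∃ i ∈ T, M r i = c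


/-- rows that hit all values on `T` are at least `q! * q^(N-q)` many. -/
lemma good_count {N q : ℕ} (T : Finset (Fin N)) (hT : T.card = q) :
    Nat.factorial q * q ^ (N - q) ≤
      Fintype.card {f : Fin N → Fin q // ∀ c : Fin q, ∃ i ∈ T, f i = c} := by
  classical
  have hcardT : Fintype.card {i : Fin N // i ∈ T} = q := by simpa using hT
  have hcardTc : Fintype.card {i : Fin N // i ∉ T} = N - q := by
    have := Fintype.card_subtype_compl (fun i : Fin N => i ∈ T)
    simpa [hcardT] using this
  let F : ({i : Fin N // i ∈ T} ≃ Fin q) × ({i : Fin N // i ∉ T} → Fin q) →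
      {f : Fin N → Fin q // ∀ c : Fin q, ∃ i ∈ T, f i = c} := fun σ =>
    ⟨fun i => if hi : i ∈ T then σ.1 ⟨i, hi⟩ else σ.2 ⟨i, hi⟩, by
      intro c
      refine ⟨(σ.1.symm c : Fin N), (σ.1.symm c).2, ?_⟩
      simp⟩
  have hinj : Function.Injective F := by
    intro a b hab
    have hfun : ∀ i : Fin N,
        (if hi : i ∈ T then a.1 ⟨i, hi⟩ else a.2 ⟨i, hi⟩) =
        (if hi : i ∈ T then b.1 ⟨i, hi⟩ else b.2 ⟨i, hi⟩) := by
      intro i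
      exact congrFun (congrArg Subtype.val hab) i
    refine Prod.ext ?_ ?_
    · refine Equiv.ext fun i => ?_
      have := hfun i.1
      rw [dif_pos i.2, dif_pos i.2] at this
      simpa using this
    · funext i
      have := hfun i.1
      rw [dif_neg i.2, dif_neg i.2] at this
      simpa using this
  calc Nat.factorial q * q ^ (N - q)
      = Fintype.card (({i : Fin N // i ∈ T} ≃ Fin q) × ({i : Fin N // i ∉ T} → Fin q)) := by
        rw [Fintype.card_prod, Fintype.card_fun, hcardTc,
          Fintype.card_equiv (Fintype.equivFinOfCardEq hcardT), hcardT, Fintype.card_fin]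
    _ ≤ _ := Fintype.card_le_of_injective F hinj

lemma bad_row_count {N q : ℕ} (T : Finset (Fin N)) (hT : T.card = q) :
    Fintype.card {f : Fin N → Fin q // ¬ ∀ c : Fin q, ∃ i ∈ T, f i = c} ≤
      (q ^ q - Nat.factorial q) * q ^ (N - q) := by
  classical
  have hqN : q ≤ N := by
    have := Finset.card_le_univ T
    simpa [hT] using this
  have h1 := good_count T hT
  have h2 := Fintype.card_subtype_compl (fun f : Fin N → Fin q => ∀ c : Fin q, ∃ i ∈ T, f i = c)
  have hpow : Fintype.card (Fin N → Fin q) = q ^ q * q ^ (N - q) := by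
    rw [Fintype.card_fun, Fintype.card_fin, Fintype.card_fin, ← pow_add,
      Nat.add_sub_cancel' hqN]
  rw [h2, hpow, Nat.sub_mul]
  exact Nat.sub_le_sub_left h1 _

lemma bad_matrix_count {n N q : ℕ} (T : Finset (Fin N)) (hT : T.card = q) :
    Fintype.card {M : Fin n → Fin N → Fin q // ∀ r, ¬ ∀ c : Fin q, ∃ i ∈ T, M r i = c}
      ≤ ((q ^ q - Nat.factorial q) * q ^ (N - q)) ^ n := by
  classical
  have e := Equiv.subtypePiEquivPi
    (p := fun (_ : Fin n) (f : Fin N → Fin q) => ¬ ∀ c : Fin q, ∃ i ∈ T, f i = c)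
  rw [Fintype.card_congr e, Fintype.card_fun, Fintype.card_fin]
  exact Nat.pow_le_pow_left (bad_row_count T hT) n


lemma fact_lt_pow {q : ℕ} (hq : 2 ≤ q) : Nat.factorial q < q ^ q := by
  have h1 : q = (q - 1) + 1 := by omega
  have h2 : Nat.factorial q = q * Nat.factorial (q - 1) := by
    conv_lhs => rw [h1]
    rw [Nat.factorial_succ, ← h1]
  have h3 : Nat.factorial (q - 1) ≤ (q - 1) ^ (q - 1) := Nat.factorial_le_pow _
  have h4 : (q - 1) ^ (q - 1) < q ^ (q - 1) :=
    Nat.pow_lt_pow_left (by omega) (by omega)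
  calc Nat.factorial q = q * Nat.factorial (q - 1) := h2
    _ ≤ q * (q - 1) ^ (q - 1) := Nat.mul_le_mul_left _ h3
    _ < q * q ^ (q - 1) := mul_lt_mul_of_pos_left h4 (by omega)
    _ = q ^ q := by rw [← pow_succ', ← h1]

lemma key_real (n q l : ℕ) (hq : 2 ≤ q) (hl : 0 < l)
    (h : (l : ℝ) ≤ (2 : ℝ) ^ (-(q : ℝ) / ((q : ℝ) - 1)) *
      (1 / (1 - (Nat.factorial q : ℝ) / (q : ℝ) ^ q)) ^ ((n : ℝ) / ((q : ℝ) - 1))) :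
    ((2 * l) ^ q * (q ^ q - Nat.factorial q) ^ n : ℕ) ≤ (l * (q ^ q) ^ n : ℕ) := by
  have hQ2 : (2:ℝ) ≤ (q:ℝ) := by exact_mod_cast hq
  have hQ1 : (0:ℝ) < (q:ℝ) - 1 := by linarith
  have hk : (0:ℝ) < (q:ℝ) ^ q := by positivity
  have hflt : (Nat.factorial q : ℝ) < (q:ℝ) ^ q := by exact_mod_cast fact_lt_pow hq
  set x : ℝ := 1 - (Nat.factorial q : ℝ) / (q:ℝ) ^ q with hx
  have hx0 : 0 < x := by
    rw [hx, sub_pos, div_lt_one hk]; exact hflt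
  -- raise h to the power (q-1)
  have h2 : (l:ℝ) ^ (((q:ℝ)) - 1) ≤ (2:ℝ) ^ (-(q:ℝ)) * (1/x) ^ ((n:ℝ)) := by
    have hpow := Real.rpow_le_rpow (by positivity) h (le_of_lt hQ1)
    rw [Real.mul_rpow (by positivity) (by positivity),
      ← Real.rpow_mul (by norm_num), ← Real.rpow_mul (by positivity)] at hpow
    have e1 : (-(q:ℝ) / ((q:ℝ) - 1)) * ((q:ℝ) - 1) = -(q:ℝ) := by field_simp
    have e2 : ((n:ℝ) / ((q:ℝ) - 1)) * ((q:ℝ) - 1) = (n:ℝ) := by field_simp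
    rw [e1, e2] at hpow
    exact hpow
  have hcast1 : (((q - 1 : ℕ)) : ℝ) = (q:ℝ) - 1 := by
    push_cast [Nat.cast_sub (show 1 ≤ q by omega)]; ring
  have h2' : (l:ℝ) ^ (q - 1 : ℕ) ≤ ((2:ℝ)^q)⁻¹ * (x^n)⁻¹ := by
    have e3 : (l:ℝ) ^ (q - 1 : ℕ) = (l:ℝ) ^ (((q:ℝ)) - 1) := by
      rw [← Real.rpow_natCast (l:ℝ) (q-1), hcast1]
    have e4 : (2:ℝ) ^ (-(q:ℝ)) = ((2:ℝ)^q)⁻¹ := by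
      rw [Real.rpow_neg (by norm_num), Real.rpow_natCast]
    have e5 : ((1:ℝ)/x) ^ ((n:ℝ)) = (x^n)⁻¹ := by
      rw [Real.rpow_natCast, one_div, inv_pow]
    rw [e3, ← e4, ← e5]
    exact h2
  have h3 : (2:ℝ)^q * x^n * (l:ℝ)^(q-1 : ℕ) ≤ 1 := by
    calc (2:ℝ)^q * x^n * (l:ℝ)^(q-1 : ℕ)
        ≤ (2:ℝ)^q * x^n * (((2:ℝ)^q)⁻¹ * (x^n)⁻¹) := by
          apply mul_le_mul_of_nonneg_left h2' (by positivity)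
      _ = 1 := by field_simp
  have hA : ((q^q - Nat.factorial q : ℕ):ℝ) = x * (q:ℝ)^q := by
    rw [Nat.cast_sub (le_of_lt (fact_lt_pow hq)), hx]
    push_cast
    field_simp
  have hlq : (l:ℝ)^q = (l:ℝ) * (l:ℝ)^(q-1:ℕ) := by
    rw [← pow_succ']
    congr 1
    omega
  have goal_real : ((2*l:ℕ):ℝ)^q * ((q^q - Nat.factorial q:ℕ):ℝ)^n
      ≤ (l:ℝ) * (((q:ℝ))^q)^n := by
    calc ((2*l:ℕ):ℝ)^q * ((q^q - Nat.factorial q:ℕ):ℝ)^n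
        = (2:ℝ)^q * ((l:ℝ)^q) * (x^n * (((q:ℝ))^q)^n) := by
          have hc2 : ((2*l:ℕ):ℝ) = 2*(l:ℝ) := by push_cast; ring
          rw [hc2, hA, mul_pow, mul_pow]
      _ = ((2:ℝ)^q * x^n * (l:ℝ)^(q-1:ℕ)) * ((l:ℝ) * (((q:ℝ))^q)^n) := by
          rw [hlq]; ring
      _ ≤ 1 * ((l:ℝ) * (((q:ℝ))^q)^n) := by
          apply mul_le_mul_of_nonneg_right h3 (by positivity)
      _ = (l:ℝ) * (((q:ℝ))^q)^n := by ring
  exact_mod_cast goal_real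

lemma count_ineq (n q l : ℕ) (hq : 2 ≤ q) (hl : 0 < l)
    (h : (l : ℝ) ≤ (2 : ℝ) ^ (-(q : ℝ) / ((q : ℝ) - 1)) *
      (1 / (1 - (Nat.factorial q : ℝ) / (q : ℝ) ^ q)) ^ ((n : ℝ) / ((q : ℝ) - 1))) :
    Nat.choose (2*l) q * ((q^q - Nat.factorial q) * q ^ (2*l - q)) ^ n
      ≤ l * q ^ (2*l*n) := by
  by_cases hql : q ≤ 2*l
  · have h1 : Nat.choose (2*l) q ≤ (2*l)^q := Nat.choose_le_pow _ _
    have h2 := key_real n q l hq hl h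
    calc Nat.choose (2*l) q * ((q^q - Nat.factorial q) * q ^ (2*l - q)) ^ n
        = Nat.choose (2*l) q * (q^q - Nat.factorial q) ^ n * (q ^ (2*l - q)) ^ n := by
          rw [mul_pow]; ring
      _ ≤ (2*l)^q * (q^q - Nat.factorial q) ^ n * (q ^ (2*l - q)) ^ n := by
          exact Nat.mul_le_mul_right _ (Nat.mul_le_mul_right _ h1)
      _ ≤ l * (q^q)^n * (q ^ (2*l - q)) ^ n := Nat.mul_le_mul_right _ h2
      _ = l * q ^ (2*l*n) := by
          rw [← pow_mul, ← pow_mul, mul_assoc, ← pow_add, ← Nat.add_mul,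
            Nat.add_sub_cancel' hql]
  · rw [Nat.choose_eq_zero_of_lt (by omega)]
    simp

lemma exists_good_matrix (n q N l : ℕ) (hq : 0 < q)
    (hcount : Nat.choose N q * ((q ^ q - Nat.factorial q) * q ^ (N - q)) ^ n
      ≤ l * q ^ (N * n)) :
    ∃ M : Fin n → Fin N → Fin q,
      ((Finset.univ.powersetCard q).filter
        (fun T : Finset (Fin N) => ∀ r, ¬ ∀ c : Fin q, ∃ i ∈ T, M r i = c)).card ≤ l := by
  classical
  by_contra hcon
  rw [not_exists] at hcon
  have hcard : Fintype.card (Fin n → Fin N → Fin q) = q ^ (N * n) := by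
    rw [Fintype.card_fun, Fintype.card_fun, Fintype.card_fin, Fintype.card_fin,
      Fintype.card_fin, ← pow_mul]
  have hswap : ∑ M : Fin n → Fin N → Fin q,
      ((Finset.univ.powersetCard q).filter
        (fun T : Finset (Fin N) => ∀ r, ¬ ∀ c : Fin q, ∃ i ∈ T, M r i = c)).card
      = ∑ T ∈ Finset.univ.powersetCard q,
          (Finset.univ.filter
            (fun M : Fin n → Fin N → Fin q => ∀ r, ¬ ∀ c : Fin q, ∃ i ∈ T, M r i = c)).card := by
    simp_rw [Finset.card_filter]
    rw [Finset.sum_comm]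
  have hub : ∑ M : Fin n → Fin N → Fin q,
      ((Finset.univ.powersetCard q).filter
        (fun T : Finset (Fin N) => ∀ r, ¬ ∀ c : Fin q, ∃ i ∈ T, M r i = c)).card
      ≤ l * q ^ (N * n) := by
    rw [hswap]
    calc ∑ T ∈ Finset.univ.powersetCard q,
          (Finset.univ.filter
            (fun M : Fin n → Fin N → Fin q => ∀ r, ¬ ∀ c : Fin q, ∃ i ∈ T, M r i = c)).card
        ≤ ∑ _T ∈ Finset.univ.powersetCard q,
            ((q ^ q - Nat.factorial q) * q ^ (N - q)) ^ n := by
          apply Finset.sum_le_sum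
          intro T hT
          rw [Finset.mem_powersetCard] at hT
          have := bad_matrix_count (n := n) T hT.2
          rwa [Fintype.card_subtype] at this
      _ = Nat.choose N q * ((q ^ q - Nat.factorial q) * q ^ (N - q)) ^ n := by
          rw [Finset.sum_const, smul_eq_mul]
          congr 1
          simp [Finset.card_powersetCard]
      _ ≤ l * q ^ (N * n) := hcount
  have hlb : (l + 1) * q ^ (N * n) ≤ ∑ M : Fin n → Fin N → Fin q,
      ((Finset.univ.powersetCard q).filter
        (fun T : Finset (Fin N) => ∀ r, ¬ ∀ c : Fin q, ∃ i ∈ T, M r i = c)).card := by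
    calc (l + 1) * q ^ (N * n) = ∑ _M : Fin n → Fin N → Fin q, (l + 1) := by
          rw [Finset.sum_const, smul_eq_mul, ← hcard]
          simp [Finset.card_univ, Nat.mul_comm]
      _ ≤ _ := by
          apply Finset.sum_le_sum
          intro M _
          exact Nat.lt_of_not_le (hcon M)
  have hqpos : 0 < q ^ (N * n) := Nat.pow_pos hq
  nlinarith [hub, hlb]

/-- For `n ≥ 1`, `q ≥ 2` and any positive `l ≤ 2^(-q/(q-1)) · (1/(1 - q!/q^q))^(n/(q-1))`,
there exists an `n × l` `q`-ary `q`-saturated matrix. -/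
theorem stmt13 (n q l : ℕ) (hn : 1 ≤ n) (hq : 2 ≤ q) (hl : 0 < l)
    (h : (l : ℝ) ≤ (2 : ℝ) ^ (-(q : ℝ) / ((q : ℝ) - 1)) *
      (1 / (1 - (Nat.factorial q : ℝ) / (q : ℝ) ^ q)) ^ ((n : ℝ) / ((q : ℝ) - 1))) :
    ∃ M : Matrix (Fin n) (Fin l) (Fin q), Saturated M q := by
  classical
  obtain ⟨M, hM⟩ := exists_good_matrix n q (2*l) l (by omega)
    (by simpa [two_mul, Nat.mul_comm] using count_ineq n q l hq hl h)
  set bad := (Finset.univ.powersetCard q).filter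
    (fun T : Finset (Fin (2*l)) => ∀ r, ¬ ∀ c : Fin q, ∃ i ∈ T, M r i = c) with hbad
  -- pick one column from each bad set
  have h2l : 0 < 2*l := by omega
  let pick : Finset (Fin (2*l)) → Fin (2*l) := fun T =>
    if hT : T.Nonempty then hT.choose else ⟨0, h2l⟩
  set D : Finset (Fin (2*l)) := bad.image pick with hD
  have hDcard : D.card ≤ l := le_trans (Finset.card_image_le) hM
  have hScard : l ≤ (Finset.univ \ D).card := by
    rw [Finset.card_sdiff_of_subset (Finset.subset_univ D), Finset.card_univ, Fintype.card_fin]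
    omega
  obtain ⟨S', hS'sub, hS'card⟩ := Finset.exists_subset_card_eq hScard
  let e : Fin l ≃ S' := (Finset.equivFinOfCardEq hS'card).symm
  refine ⟨fun r i => M r (e i : Fin (2*l)), ?_⟩
  intro T' hT'
  set g : Fin l → Fin (2*l) := fun i => (e i : Fin (2*l)) with hg
  have hginj : Function.Injective g := by
    intro a b hab
    exact e.injective (Subtype.ext hab)
  set T : Finset (Fin (2*l)) := T'.image g with hT
  have hTcard : T.card = q := by
    rw [hT, Finset.card_image_of_injective _ hginj, hT']
  have hTsub : T ⊆ Finset.univ \ D := by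
    intro i hi
    rw [hT, Finset.mem_image] at hi
    obtain ⟨j, hj, rfl⟩ := hi
    exact hS'sub (e j).2
  have hTnotbad : T ∉ bad := by
    intro hmem
    have hTne : T.Nonempty := Finset.card_pos.mp (by omega)
    have hpickT : pick T ∈ T := by
      simp only [pick, dif_pos hTne]
      exact hTne.choose_spec
    have hpickD : pick T ∈ D := Finset.mem_image_of_mem pick hmem
    have := hTsub hpickT
    rw [Finset.mem_sdiff] at this
    exact this.2 hpickD
  have hgoodT : ∃ r, ∀ c : Fin q, ∃ i ∈ T, M r i = c := by
    have hTmem : T ∈ Finset.univ.powersetCard q := by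
      rw [Finset.mem_powersetCard]; exact ⟨Finset.subset_univ _, hTcard⟩
    have hnb : ¬ ∀ r, ¬ ∀ c : Fin q, ∃ i ∈ T, M r i = c := by
      intro hall
      exact hTnotbad (by rw [hbad]; exact Finset.mem_filter.mpr ⟨hTmem, hall⟩)
    push_neg at hnb
    exact hnb
  obtain ⟨r, hr⟩ := hgoodT
  refine ⟨r, fun c => ?_⟩
  obtain ⟨i, hi, hic⟩ := hr c
  rw [hT, Finset.mem_image] at hi
  obtain ⟨j, hj, rfl⟩ := hi
  exact ⟨j, hj, hic⟩
end

section
/- For all integers n ≥ 1, q ≥ 2, every integer t with t ≥ q·ln q, and every positive integer l with l ≤ 2^{−t/(t−1)} · ((1/q)·e^{t/q})^{n/(t−1)}, there exists an n × l matrix with entries in [q] that is t-saturated. -/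
open Real Finset

lemma Fkey (q t : ℕ) (hq : 2 ≤ q) (ht2 : 2 ≤ t) :
    (t:ℝ)^2/q - Real.log q - (t:ℝ)*((t:ℝ)-1)*(Real.log q - Real.log ((q:ℝ)-1)) ≤ 0 := by
  have hQ1 : (1:ℝ) < (q:ℝ) := by exact_mod_cast hq.trans_lt' one_lt_two
  have hQ0 : (0:ℝ) < (q:ℝ) := by linarith
  have hT2 : (2:ℝ) ≤ (t:ℝ) := by exact_mod_cast ht2
  rcases eq_or_lt_of_le hq with h2 | h3
  · have hq2 : (q:ℝ) = 2 := by exact_mod_cast h2.symm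
    rw [hq2]
    simp only [show (2:ℝ)-1 = 1 by norm_num, Real.log_one]
    have hl2 := Real.log_two_gt_d9
    nlinarith [sq_nonneg ((t:ℝ) - 9/5), sq_nonneg ((t:ℝ) - 2)]
  · have hq3 : (3:ℝ) ≤ (q:ℝ) := by exact_mod_cast h3
    have hLQ : (1:ℝ) ≤ Real.log q := by
      rw [Real.le_log_iff_exp_le hQ0]
      calc rexp 1 ≤ 2.7182818286 := (Real.exp_one_lt_d9).le
        _ ≤ (q:ℝ) := by linarith
    set s : ℝ := Real.sqrt (((q:ℝ)-1)/q) with hs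
    have hfrac_pos : (0:ℝ) < ((q:ℝ)-1)/q := div_pos (by linarith) hQ0
    have hs2 : s^2 = ((q:ℝ)-1)/q := Real.sq_sqrt hfrac_pos.le
    have hs2' : s^2 * q = (q:ℝ) - 1 := by rw [hs2]; field_simp
    have hs_pos : 0 < s := Real.sqrt_pos.mpr hfrac_pos
    have hq1lt : ((q:ℝ)-1)/q < 1 := by rw [div_lt_one hQ0]; linarith
    have hs_lt1 : s < 1 := by
      calc s < Real.sqrt 1 := Real.sqrt_lt_sqrt hfrac_pos.le hq1lt
        _ = 1 := Real.sqrt_one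
    have hlog_s : Real.log s ≤ s - 1 := Real.log_le_sub_one_of_pos hs_pos
    have hlogdiff : 2*(1-s) ≤ Real.log q - Real.log ((q:ℝ)-1) := by
      have hld : Real.log (((q:ℝ)-1)/q) = Real.log ((q:ℝ)-1) - Real.log q :=
        Real.log_div (by linarith) (by linarith)
      have h2 : Real.log (s^2) = 2 * Real.log s := by
        rw [Real.log_pow]; push_cast; ring
      rw [← hs2, h2] at hld
      linarith
    have key : (t:ℝ)^2/q = (t:ℝ)^2 * (1 - s^2) := by
      rw [eq_comm, hs2]; field_simp; ring
    rw [key]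
    nlinarith [sq_nonneg ((t:ℝ)*(1-s) - 1), mul_le_mul_of_nonneg_left hlogdiff
      (by nlinarith : (0:ℝ) ≤ (t:ℝ)*((t:ℝ)-1))]

lemma two_pow_le_fact (t : ℕ) : 2 ^ (t-1) ≤ t.factorial := by
  induction t with
  | zero => simp
  | succ k ih =>
    rcases Nat.eq_zero_or_pos k with h1 | h1
    · simp [h1]
    · rw [Nat.factorial_succ, show k+1-1 = (k-1)+1 by omega, pow_succ, mul_comm (2^(k-1)) 2]
      exact Nat.mul_le_mul (by omega) ih

lemma count_ineq_s14 (n q t l : ℕ) (hn : 1 ≤ n) (hq : 2 ≤ q) (ht2 : 2 ≤ t) (htl : t ≤ l)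
    (h : (l : ℝ) ≤ (2 : ℝ) ^ (-(t : ℝ) / ((t : ℝ) - 1)) *
      ((1 / (q : ℝ)) * Real.exp ((t : ℝ) / q)) ^ ((n : ℝ) / ((t : ℝ) - 1))) :
    l.choose t * (q * (q-1)^t * q^(l-t))^n < (q^l)^n := by
  have hQ2 : (2:ℝ) ≤ (q:ℝ) := by exact_mod_cast hq
  have hQ0 : (0:ℝ) < (q:ℝ) := by linarith
  have hQ1 : (0:ℝ) < (q:ℝ) - 1 := by linarith
  have hT2 : (2:ℝ) ≤ (t:ℝ) := by exact_mod_cast ht2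
  have hT1 : (0:ℝ) < (t:ℝ) - 1 := by linarith
  have hN1 : (1:ℝ) ≤ (n:ℝ) := by exact_mod_cast hn
  set W : ℝ := (1 / (q : ℝ)) * Real.exp ((t : ℝ) / q) with hW
  have hW0 : 0 < W := by positivity
  set S : ℝ := ((q:ℝ)-1)^t * (q:ℝ) / (q:ℝ)^t with hS
  have hS0 : 0 < S := by positivity
  -- cast goal to ℝ
  rw [← Nat.cast_lt (α := ℝ)]
  push_cast [Nat.cast_sub (by omega : 1 ≤ q)]
  -- rewrite LHS product
  have hsplit : ((q:ℝ) * ((q:ℝ)-1)^t * (q:ℝ)^(l-t))^n = S^n * ((q:ℝ)^l)^n := by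
    rw [← mul_pow]
    congr 1
    rw [hS]
    rw [show (q:ℝ)^l = (q:ℝ)^(l-t) * (q:ℝ)^t by rw [← pow_add]; congr 1; omega]
    field_simp
  rw [hsplit, ← mul_assoc]
  have hQln : (0:ℝ) < ((q:ℝ)^l)^n := by positivity
  have key : (l.choose t : ℝ) * S ^ n < 1 := ?_
  · calc (l.choose t : ℝ) * S ^ n * ((q:ℝ)^l)^n < 1 * ((q:ℝ)^l)^n :=
        mul_lt_mul_of_pos_right key hQln
      _ = ((q:ℝ)^l)^n := one_mul _
  -- choose bound
  have hchoose : (l.choose t : ℝ) * 2^(t-1+1) ≤ (l:ℝ)^t * 2 := by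
    have h1 : l.choose t * 2^(t-1) ≤ l^t := by
      calc l.choose t * 2^(t-1) ≤ l.choose t * t.factorial :=
            Nat.mul_le_mul_left _ (two_pow_le_fact t)
        _ = t.factorial * l.choose t := by ring
        _ = l.descFactorial t := (Nat.descFactorial_eq_factorial_mul_choose l t).symm
        _ ≤ l^t := Nat.descFactorial_le_pow l t
    have h1' : (l.choose t : ℝ) * 2^(t-1) ≤ (l:ℝ)^t := by exact_mod_cast h1
    calc (l.choose t : ℝ) * 2^(t-1+1) = ((l.choose t : ℝ) * 2^(t-1)) * 2 := by rw [pow_succ]; ring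
      _ ≤ (l:ℝ)^t * 2 := by linarith [h1']
  have ht11 : t - 1 + 1 = t := by omega
  rw [ht11] at hchoose
  -- pow bound from h
  set a : ℝ := (n:ℝ) * t / ((t:ℝ)-1) with ha
  have hpow : (l:ℝ)^t ≤ (2:ℝ)^(-((t:ℝ)+1)) * W ^ a := by
    have hrhs0 : (0:ℝ) ≤ (2:ℝ) ^ (-(t : ℝ) / ((t : ℝ) - 1)) * W ^ ((n : ℝ) / ((t : ℝ) - 1)) := by
      positivity
    have := pow_le_pow_left₀ (by positivity : (0:ℝ) ≤ (l:ℝ)) h t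
    refine this.trans ?_
    rw [mul_pow]
    rw [← Real.rpow_natCast ((2:ℝ) ^ (-(t : ℝ) / ((t : ℝ) - 1))) t,
        ← Real.rpow_natCast (W ^ ((n : ℝ) / ((t : ℝ) - 1))) t,
        ← Real.rpow_mul (by norm_num : (0:ℝ) ≤ 2),
        ← Real.rpow_mul hW0.le,
        show ((n : ℝ) / ((t : ℝ) - 1)) * (t:ℝ) = a by rw [ha]; ring]
    have hexp : (-(t : ℝ) / ((t : ℝ) - 1)) * (t:ℝ) ≤ -((t:ℝ)+1) := by
      rw [div_mul_eq_mul_div, div_le_iff₀ hT1]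
      nlinarith
    exact mul_le_mul_of_nonneg_right
      (Real.rpow_le_rpow_of_exponent_le (by norm_num) hexp) (by positivity)
  -- the bracket bound
  have hbracket : W ^ a * S ^ n ≤ 1 := by
    have hpos : 0 < W ^ a * S ^ n := by positivity
    rw [← Real.log_nonpos_iff hpos.le]
    rw [Real.log_mul (by positivity) (by positivity), Real.log_rpow hW0, Real.log_pow]
    have hlogW : Real.log W = (t:ℝ)/q - Real.log q := by
      rw [hW, Real.log_mul (by positivity) (Real.exp_ne_zero _), Real.log_exp,
        one_div, Real.log_inv]
      ring
    have hlogS : Real.log S = (t:ℝ) * Real.log ((q:ℝ)-1) + Real.log q - (t:ℝ) * Real.log q := by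
      rw [hS, Real.log_div (by positivity) (by positivity),
        Real.log_mul (by positivity) (by positivity), Real.log_pow, Real.log_pow]
      try push_cast
      try ring
    rw [hlogW, hlogS]
    have hF := Fkey q t hq ht2
    have heq : a * ((t:ℝ)/q - Real.log q) + (n:ℝ) * ((t:ℝ) * Real.log ((q:ℝ)-1) + Real.log q - (t:ℝ) * Real.log q)
        = ((n:ℝ)/((t:ℝ)-1)) * ((t:ℝ)^2/q - Real.log q - (t:ℝ)*((t:ℝ)-1)*(Real.log q - Real.log ((q:ℝ)-1))) := by
      rw [ha]; field_simp; ring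
    rw [heq]
    apply mul_nonpos_of_nonneg_of_nonpos (by positivity) hF
  -- combine
  have h2t : (2:ℝ)^(-((t:ℝ)+1)) = 1/(2:ℝ)^(t+1) := by
    rw [show -((t:ℝ)+1) = -(((t+1:ℕ)):ℝ) by push_cast; ring, Real.rpow_neg (by norm_num),
      Real.rpow_natCast]
    exact inv_eq_one_div _
  calc (l.choose t : ℝ) * S ^ n ≤ ((l:ℝ)^t * 2 / 2^t) * S^n := by
        apply mul_le_mul_of_nonneg_right _ (by positivity)
        rw [le_div_iff₀ (by positivity)]
        linarith [hchoose]
    _ = (2 / 2^t) * ((l:ℝ)^t * S^n) := by ring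
    _ ≤ (2 / 2^t) * ((2:ℝ)^(-((t:ℝ)+1)) * W ^ a * S^n) := by
        apply mul_le_mul_of_nonneg_left _ (by positivity)
        apply mul_le_mul_of_nonneg_right _ (by positivity)
        exact hpow
    _ = (2 / 2^t) * (1/(2:ℝ)^(t+1)) * (W ^ a * S^n) := by rw [h2t]; ring
    _ ≤ (2 / 2^t) * (1/(2:ℝ)^(t+1)) * 1 := by
        apply mul_le_mul_of_nonneg_left hbracket (by positivity)
    _ < 1 := by
        rw [mul_one]
        rw [div_mul_div_comm, div_lt_one (by positivity)]
        have : (2:ℝ)^t * (2:ℝ)^(t+1) = 2^(2*t+1) := by rw [← pow_add]; congr 1; omega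
        rw [mul_one, this]
        calc (2:ℝ) < 2^2 := by norm_num
          _ ≤ 2^(2*t+1) := by apply pow_le_pow_right₀ (by norm_num); omega

/-- For `n ≥ 1`, `q ≥ 2`, any integer `t ≥ q·ln q` and any positive
`l ≤ 2^(-t/(t-1)) · ((1/q)·e^(t/q))^(n/(t-1))`, there exists an `n × l` `q`-ary
`t`-saturated matrix. -/
theorem stmt14 (n q t l : ℕ) (hn : 1 ≤ n) (hq : 2 ≤ q)
    (ht : (q : ℝ) * Real.log q ≤ t) (hl : 0 < l)
    (h : (l : ℝ) ≤ (2 : ℝ) ^ (-(t : ℝ) / ((t : ℝ) - 1)) *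
      ((1 / (q : ℝ)) * Real.exp ((t : ℝ) / q)) ^ ((n : ℝ) / ((t : ℝ) - 1))) :
    ∃ M : Matrix (Fin n) (Fin l) (Fin q), Saturated M t := by
  classical
  have ht2 : 2 ≤ t := by
    have h2q : (2:ℝ) ≤ (q:ℝ) := by exact_mod_cast hq
    have hlog2 : Real.log 2 ≤ Real.log q := Real.log_le_log (by norm_num) h2q
    have h1 : (1:ℝ) < (t:ℝ) := by
      have := Real.log_two_gt_d9
      nlinarith
    by_contra hc
    have : (t:ℝ) ≤ 1 := by exact_mod_cast (by omega : t ≤ 1)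
    linarith
  by_cases htl : t ≤ l
  swap
  · refine ⟨fun _ _ => ⟨0, by omega⟩, fun T hT => absurd hT ?_⟩
    have : T.card ≤ l := by
      simpa using Finset.card_le_card (Finset.subset_univ T)
    omega
  -- main case
  by_contra hno
  push_neg at hno
  -- every matrix is bad
  have hbad : ∀ M : Matrix (Fin n) (Fin l) (Fin q), ∃ T : Finset (Fin l),
      T.card = t ∧ ∀ r : Fin n, ∃ c : Fin q, ∀ i ∈ T, M r i ≠ c := by
    intro M
    have := hno M
    rw [Saturated] at this
    push_neg at this
    obtain ⟨T, hT, hrow⟩ := this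
    exact ⟨T, hT, fun r => by
      obtain ⟨c, hc⟩ := hrow r
      exact ⟨c, fun i hi => by
        intro he; exact hc i hi he⟩⟩
  set badT : Finset (Fin l) → Finset (Matrix (Fin n) (Fin l) (Fin q)) :=
    fun T => univ.filter (fun M => ∀ r : Fin n, ∃ c : Fin q, ∀ i ∈ T, M r i ≠ c) with hbadT
  have hcardbad : ∀ T : Finset (Fin l), T.card = t →
      (badT T).card ≤ (q * (q-1)^t * q^(l-t))^n := by
    intro T hT
    set badRow : Finset (Fin l → Fin q) :=
      univ.filter (fun f => ∃ c : Fin q, ∀ i ∈ T, f i ≠ c) with hbr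
    have heq : badT T = Fintype.piFinset (fun _ : Fin n => badRow) := by
      ext M
      rw [hbadT]
      simp only [Finset.mem_filter, Finset.mem_univ, true_and]
      refine Iff.trans ?_ Fintype.mem_piFinset.symm
      simp [hbr]
    have hrowcard : badRow.card ≤ q * ((q-1)^t * q^(l-t)) := by
      have hsub : badRow ⊆ (univ : Finset (Fin q)).biUnion
          (fun c => Fintype.piFinset (fun i : Fin l => if i ∈ T then {c}ᶜ else univ)) := by
        intro f hf
        rw [hbr, Finset.mem_filter] at hf
        obtain ⟨-, c, hc⟩ := hf
        rw [Finset.mem_biUnion]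
        refine ⟨c, Finset.mem_univ c, ?_⟩
        rw [Fintype.mem_piFinset]
        intro i
        by_cases hi : i ∈ T <;> simp [hi, hc i]
      refine (Finset.card_le_card hsub).trans ?_
      refine (Finset.card_biUnion_le).trans ?_
      have : ∀ c : Fin q, (Fintype.piFinset (fun i : Fin l => if i ∈ T then ({c}ᶜ : Finset (Fin q)) else univ)).card
          = (q-1)^t * q^(l-t) := by
        intro c
        rw [Fintype.card_piFinset]
        have : ∀ i : Fin l, (if i ∈ T then ({c}ᶜ : Finset (Fin q)) else univ).card
            = if i ∈ T then q-1 else q := by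
          intro i
          by_cases hi : i ∈ T <;> simp [hi, Finset.card_compl]
        rw [Finset.prod_congr rfl (fun i _ => this i), Finset.prod_ite, Finset.prod_const,
          Finset.prod_const]
        have h1 : (univ.filter (fun i : Fin l => i ∈ T)).card = t := by
          rw [Finset.filter_mem_eq_inter, Finset.univ_inter, hT]
        have h2 : (univ.filter (fun i : Fin l => ¬ i ∈ T)).card = l - t := by
          have he : univ.filter (fun i : Fin l => ¬ i ∈ T) = Tᶜ := by
            ext i; simp
          rw [he, Finset.card_compl, hT, Fintype.card_fin]
        rw [h1, h2]
      rw [Finset.sum_congr rfl (fun c _ => this c), Finset.sum_const, Finset.card_univ,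
        Fintype.card_fin, smul_eq_mul]
    calc (badT T).card = badRow.card ^ n := by
          rw [heq]; exact (Fintype.card_piFinset (fun _ : Fin n => badRow)).trans (by simp)
      _ ≤ (q * ((q-1)^t * q^(l-t)))^n := Nat.pow_le_pow_left hrowcard n
      _ = (q * (q-1)^t * q^(l-t))^n := by ring_nf
  -- union bound
  have hcover : (univ : Finset (Matrix (Fin n) (Fin l) (Fin q))) ⊆
      (Finset.powersetCard t (univ : Finset (Fin l))).biUnion badT := by
    intro M _
    obtain ⟨T, hT, hMT⟩ := hbad M
    rw [Finset.mem_biUnion]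
    exact ⟨T, Finset.mem_powersetCard.mpr ⟨Finset.subset_univ T, hT⟩,
      Finset.mem_filter.mpr ⟨Finset.mem_univ M, hMT⟩⟩
  have htotal : (univ : Finset (Matrix (Fin n) (Fin l) (Fin q))).card = (q^l)^n := by
    rw [Finset.card_univ]
    show Fintype.card (Fin n → Fin l → Fin q) = _
    rw [Fintype.card_fun, Fintype.card_fun]
    simp
  have hfinal := (Finset.card_le_card hcover).trans Finset.card_biUnion_le
  rw [htotal] at hfinal
  have hsum : ∑ T ∈ Finset.powersetCard t (univ : Finset (Fin l)), (badT T).card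
      ≤ l.choose t * (q * (q-1)^t * q^(l-t))^n := by
    calc ∑ T ∈ Finset.powersetCard t (univ : Finset (Fin l)), (badT T).card
        ≤ ∑ _T ∈ Finset.powersetCard t (univ : Finset (Fin l)), (q * (q-1)^t * q^(l-t))^n :=
          Finset.sum_le_sum (fun T hTm => hcardbad T (Finset.mem_powersetCard.mp hTm).2)
      _ = l.choose t * (q * (q-1)^t * q^(l-t))^n := by
          rw [Finset.sum_const, Finset.card_powersetCard, Finset.card_univ, Fintype.card_fin,
            smul_eq_mul]
  have := count_ineq_s14 n q t l hn hq ht2 htl h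
  omega
end

section
/- Let m, n, q be positive integers. If there exists an n × q^m matrix with entries in [q] that is (m+1)-saturated, then the complete bipartite graph K_{m,n} is q-solvable. -/
/-- A guessing strategy: `g v` may only depend on the colors of the vertices
that `v` sees, i.e. those `u` with `Adj v u`. -/
def IsHatStrategy {V : Type*} (Adj : V → V → Prop) (q : ℕ)
    (g : V → (V → Fin q) → Fin q) : Prop :=
  ∀ v : V, ∀ x y : V → Fin q, (∀ u, Adj v u → x u = y u) → g v x = g v y

/-- A graph (given by its adjacency/visibility relation) is `q`-solvable if there is a
guessing strategy that guarantees a correct guess for every coloring. -/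
def Solvable {V : Type*} (Adj : V → V → Prop) (q : ℕ) : Prop :=
  ∃ g : V → (V → Fin q) → Fin q, IsHatStrategy Adj q g ∧ ∀ x, ∃ v, g v x = x v

/-- If there exists an `n × q^m` `q`-ary `(m+1)`-saturated matrix, then the complete
bipartite graph `K_{m,n}` is `q`-solvable. -/
theorem stmt15 (m n q : ℕ) (hm : 0 < m) (hn : 0 < n) (hq : 0 < q)
    (h : ∃ M : Matrix (Fin n) (Fin (q ^ m)) (Fin q), Saturated M (m + 1)) :
    Solvable (completeBipartiteGraph (Fin m) (Fin n)).Adj q := by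
  obtain ⟨M, hM⟩ := h
  have hcard : Fintype.card (Fin m → Fin q) = q ^ m := by
    simp [Fintype.card_fun]
  let e : (Fin m → Fin q) ≃ Fin (q ^ m) := Fintype.equivFinOfCardEq hcard
  let bad : (Fin n → Fin q) → Finset (Fin (q ^ m)) :=
    fun z => Finset.univ.filter (fun c => ∀ i, M i c ≠ z i)
  have hbad : ∀ z, (bad z).card ≤ m := by
    intro z
    by_contra hlt
    push_neg at hlt
    obtain ⟨T, hTsub, hTc⟩ := Finset.exists_subset_card_eq hlt
    obtain ⟨r, hr⟩ := hM T hTc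
    obtain ⟨i, hiT, hi⟩ := hr (z r)
    have := hTsub hiT
    simp only [bad, Finset.mem_filter] at this
    exact this.2 r hi
  let L : (Fin n → Fin q) → List (Fin (q ^ m)) :=
    fun z => (bad z).sort (· ≤ ·)
  let g : (Fin m ⊕ Fin n) → ((Fin m ⊕ Fin n) → Fin q) → Fin q := fun v x =>
    match v with
    | .inr i => M i (e (fun j => x (.inl j)))
    | .inl j =>
      let l := L (fun i => x (.inr i))
      if h : (j : ℕ) < l.length then (e.symm (l.get ⟨j, h⟩)) j else ⟨0, hq⟩
  refine ⟨g, ?_, ?_⟩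
  · rintro (j | i) x y hxy
    · have hz : (fun i => x (.inr i)) = (fun i => y (.inr i)) := by
        funext i
        exact hxy (.inr i) (by simp)
      show (let l := L (fun i => x (.inr i));
        if h : (j : ℕ) < l.length then (e.symm (l.get ⟨j, h⟩)) j else ⟨0, hq⟩) = _
      rw [hz]
    · have hz : (fun j => x (.inl j)) = (fun j => y (.inl j)) := by
        funext j
        exact hxy (.inl j) (by simp)
      simp only [g, hz]
  · intro x
    set y : Fin m → Fin q := fun j => x (.inl j) with hy
    set z : Fin n → Fin q := fun i => x (.inr i) with hz
    by_cases hc : ∃ i, M i (e y) = z i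
    · obtain ⟨i, hi⟩ := hc
      exact ⟨.inr i, hi⟩
    · push_neg at hc
      have hmem : e y ∈ bad z := by
        simp only [bad, Finset.mem_filter, Finset.mem_univ, true_and]
        exact hc
      have hmemL : e y ∈ L z := by
        simpa [L, Finset.mem_sort] using hmem
      have hlen : (L z).length ≤ m := by
        simpa [L, Finset.length_sort] using hbad z
      set k := (L z).idxOf (e y) with hk
      have hkl : k < (L z).length := List.idxOf_lt_length_iff.mpr hmemL
      have hkm : k < m := lt_of_lt_of_le hkl hlen
      refine ⟨.inl ⟨k, hkm⟩, ?_⟩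
      have hget : (L z).get ⟨k, hkl⟩ = e y := List.idxOf_get hkl
      simp only [g]
      rw [dif_pos hkl]
      rw [hget, Equiv.symm_apply_apply]
end

section
/- (i) There exists a constant c_1 > 0 not depending on q such that for every integer q ≥ 2, the complete bipartite graph K_{q−1, ⌈c_1·e^q·q^{3/2}·ln q⌉} is q-solvable, i.e., HG(K_{q−1, ⌈c_1 e^q q^{3/2} ln q⌉}) ≥ q. (ii) There exists a constant c_2 > 0 not depending on q such that for every integer q ≥ 2, the complete bipartite graph K_{⌈2q·ln q⌉, ⌈c_2·q²·(ln q)²⌉} is q-solvable, i.e., HG(K_{⌈2q ln q⌉, ⌈c_2 q² (ln q)²⌉}) ≥ q. -/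
section Framework
variable {q m n : ℕ}

/-- If there are "joint strategies" `h` (right side, seeing the left coloring) and a
transversal choice for each right coloring, the complete bipartite graph is solvable. -/
lemma solvable_of_exists (hq : 1 ≤ q)
    (H : ∃ h : (Fin m → Fin q) → (Fin n → Fin q), ∀ b : Fin n → Fin q,
        ∃ c : Fin m → Fin q, ∀ a : Fin m → Fin q,
          (∀ v, b v ≠ h a v) → ∃ u, a u = c u) :
    Solvable (completeBipartiteGraph (Fin m) (Fin n)).Adj q := by
  obtain ⟨h, hh⟩ := H
  choose C hC using hh
  refine ⟨fun v x => match v with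
    | Sum.inl u => C (fun w => x (Sum.inr w)) u
    | Sum.inr w => h (fun u => x (Sum.inl u)) w, ?_, ?_⟩
  · rintro (u | w) x y hxy
    · have : (fun w => x (Sum.inr w)) = fun w => y (Sum.inr w) := by
        funext w; exact hxy (Sum.inr w) (by simp [completeBipartiteGraph])
      simp only [this]
    · have : (fun u => x (Sum.inl u)) = fun u => y (Sum.inl u) := by
        funext u; exact hxy (Sum.inl u) (by simp [completeBipartiteGraph])
      simp only [this]
  · intro x
    set a : Fin m → Fin q := fun u => x (Sum.inl u) with ha
    set b : Fin n → Fin q := fun w => x (Sum.inr w) with hb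
    by_cases hw : ∃ w, b w = h a w
    · obtain ⟨w, hw⟩ := hw
      exact ⟨Sum.inr w, hw.symm⟩
    · push_neg at hw
      obtain ⟨u, hu⟩ := hC b a hw
      exact ⟨Sum.inl u, hu.symm⟩

/-- A family of at most `m` vectors in `[q]^m` has a transversal. -/
lemma exists_transversal (hq : 1 ≤ q) (S : Finset (Fin m → Fin q)) (hS : S.card ≤ m) :
    ∃ c : Fin m → Fin q, ∀ a ∈ S, ∃ u, a u = c u := by
  classical
  have hcard : Fintype.card {a // a ∈ S} ≤ Fintype.card (Fin m) := by
    simpa using hS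
  obtain ⟨ι⟩ := Function.Embedding.nonempty_of_card_le hcard
  have hq0 : (0 : ℕ) < q := hq
  refine ⟨fun u => if hu : ∃ s : {a // a ∈ S}, ι s = u then hu.choose.1 u else ⟨0, hq0⟩, ?_⟩
  intro a ha
  refine ⟨ι ⟨a, ha⟩, ?_⟩
  have hu : ∃ s : {a // a ∈ S}, ι s = ι ⟨a, ha⟩ := ⟨⟨a, ha⟩, rfl⟩
  have h1 : hu.choose = ⟨a, ha⟩ := ι.injective hu.choose_spec
  simp only [dif_pos hu, h1]

end Framework
section Counting

open Finset

/-- Counting/probabilistic existence of a good right-side strategy: if the number of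
`K`-tuples times the count of non-surjective columns is small, some `h` works. -/
lemma exists_good_h (q m n K : ℕ) (hq : 0 < q) (hK : K ≤ q ^ m)
    (hcount : Fintype.card (Fin K ↪ (Fin m → Fin q)) *
        (Fintype.card {t : Fin K → Fin q // ¬ Function.Surjective t}) ^ n
      < q ^ (K * n)) :
    ∃ h : (Fin m → Fin q) → (Fin n → Fin q),
      ∀ f : Fin K ↪ (Fin m → Fin q), ∃ v : Fin n,
        Function.Surjective (fun i => h (f i) v) := by
  classical
  set NS := Fintype.card {t : Fin K → Fin q // ¬ Function.Surjective t} with hNS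
  by_contra hcon
  push_neg at hcon
  have cover : (Finset.univ : Finset ((Fin m → Fin q) → Fin n → Fin q)) ⊆
      Finset.univ.biUnion (fun f : Fin K ↪ (Fin m → Fin q) =>
        Finset.univ.filter (fun h : (Fin m → Fin q) → Fin n → Fin q =>
          ∀ v, ¬ Function.Surjective fun i => h (f i) v)) := by
    intro h _
    obtain ⟨f, hf⟩ := hcon h
    refine Finset.mem_biUnion.2 ⟨f, Finset.mem_univ _, ?_⟩
    simp only [Finset.mem_filter, Finset.mem_univ, true_and]
    exact hf
  have hbad : ∀ f : Fin K ↪ (Fin m → Fin q),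
      (Finset.univ.filter (fun h : (Fin m → Fin q) → Fin n → Fin q =>
          ∀ v, ¬ Function.Surjective fun i => h (f i) v)).card
        ≤ NS ^ n * (q ^ n) ^ (q ^ m - K) := by
    intro f
    rw [← Fintype.card_subtype]
    have hinj : Function.Injective
        (fun hh : {h : (Fin m → Fin q) → Fin n → Fin q //
            ∀ v, ¬ Function.Surjective fun i => h (f i) v} =>
          ((fun v => (⟨fun i => hh.1 (f i) v, hh.2 v⟩ :
              {t : Fin K → Fin q // ¬ Function.Surjective t})),
           (fun d : {d : Fin m → Fin q // d ∉ Set.range ⇑f} => hh.1 d.1)) ) := by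
      intro h h' e
      have e1 := congrArg Prod.fst e
      have e2 := congrArg Prod.snd e
      simp only at e1 e2
      apply Subtype.ext
      funext d
      by_cases hd : d ∈ Set.range ⇑f
      · obtain ⟨i, rfl⟩ := hd
        funext v
        have := congrArg Subtype.val (congrFun e1 v)
        exact congrFun this i
      · exact congrFun e2 ⟨d, hd⟩
    have hle := Fintype.card_le_of_injective _ hinj
    have hrange : Fintype.card {d : Fin m → Fin q // d ∈ Set.range ⇑f} = K := by
      have e : Fintype.card {d : Fin m → Fin q // d ∈ Set.range ⇑f} = Fintype.card (Fin K) :=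
        Fintype.card_congr (Equiv.ofInjective _ f.injective).symm
      exact e.trans (Fintype.card_fin K)
    have hcompl : Fintype.card {d : Fin m → Fin q // d ∉ Set.range ⇑f} = q ^ m - K := by
      rw [Fintype.card_subtype_compl, hrange]
      congr 1
      simp [Fintype.card_fun]
    have hcard1 : Fintype.card ((Fin n → {t : Fin K → Fin q // ¬ Function.Surjective t}) ×
        ({d : Fin m → Fin q // d ∉ Set.range ⇑f} → Fin n → Fin q))
        = NS ^ n * (q ^ n) ^ (q ^ m - K) := by
      rw [Fintype.card_prod, Fintype.card_fun, Fintype.card_fun, Fintype.card_fun, hcompl]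
      simp only [Fintype.card_fin]
      rfl
    exact hcard1 ▸ hle
  have htot : ((Finset.univ : Finset ((Fin m → Fin q) → Fin n → Fin q))).card
      = (q ^ n) ^ (q ^ m) := by
    rw [Finset.card_univ, Fintype.card_fun, Fintype.card_fun, Fintype.card_fun]
    simp
  have hle2 : (q ^ n) ^ (q ^ m) ≤
      Fintype.card (Fin K ↪ (Fin m → Fin q)) * (NS ^ n * (q ^ n) ^ (q ^ m - K)) := by
    calc (q ^ n) ^ (q ^ m)
        = ((Finset.univ : Finset ((Fin m → Fin q) → Fin n → Fin q))).card := htot.symm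
      _ ≤ (Finset.univ.biUnion (fun f : Fin K ↪ (Fin m → Fin q) =>
            Finset.univ.filter (fun h : (Fin m → Fin q) → Fin n → Fin q =>
              ∀ v, ¬ Function.Surjective fun i => h (f i) v))).card :=
          Finset.card_le_card cover
      _ ≤ ∑ f : Fin K ↪ (Fin m → Fin q),
            (Finset.univ.filter (fun h : (Fin m → Fin q) → Fin n → Fin q =>
              ∀ v, ¬ Function.Surjective fun i => h (f i) v)).card :=
          Finset.card_biUnion_le
      _ ≤ ∑ _f : Fin K ↪ (Fin m → Fin q), NS ^ n * (q ^ n) ^ (q ^ m - K) :=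
          Finset.sum_le_sum (fun f _ => hbad f)
      _ = Fintype.card (Fin K ↪ (Fin m → Fin q)) * (NS ^ n * (q ^ n) ^ (q ^ m - K)) := by
          rw [Finset.sum_const, Finset.card_univ, smul_eq_mul]
  have hlt2 : Fintype.card (Fin K ↪ (Fin m → Fin q)) * (NS ^ n * (q ^ n) ^ (q ^ m - K))
      < (q ^ n) ^ (q ^ m) := by
    have hpos : 0 < (q ^ n) ^ (q ^ m - K) := pow_pos (pow_pos hq _) _
    have h1 : Fintype.card (Fin K ↪ (Fin m → Fin q)) * NS ^ n * (q ^ n) ^ (q ^ m - K)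
        < q ^ (K * n) * (q ^ n) ^ (q ^ m - K) :=
      Nat.mul_lt_mul_of_pos_right hcount hpos
    have h2 : q ^ (K * n) * (q ^ n) ^ (q ^ m - K) = (q ^ n) ^ (q ^ m) := by
      obtain ⟨d, hd⟩ := Nat.le.dest hK
      rw [← pow_mul, ← pow_mul, ← pow_add, ← hd, Nat.add_sub_cancel_left]
      congr 1
      ring
    calc Fintype.card (Fin K ↪ (Fin m → Fin q)) * (NS ^ n * (q ^ n) ^ (q ^ m - K))
        = Fintype.card (Fin K ↪ (Fin m → Fin q)) * NS ^ n * (q ^ n) ^ (q ^ m - K) := by ring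
      _ < q ^ (K * n) * (q ^ n) ^ (q ^ m - K) := h1
      _ = (q ^ n) ^ (q ^ m) := h2
  omega

end Counting
section Glue

/-- From the counting condition, the complete bipartite graph is `q`-solvable. -/
lemma solvable_of_count (q m n : ℕ) (hq : 2 ≤ q) (hKm : m + 1 ≤ q ^ m)
    (hcount : Fintype.card (Fin (m+1) ↪ (Fin m → Fin q)) *
        (Fintype.card {t : Fin (m+1) → Fin q // ¬ Function.Surjective t}) ^ n
      < q ^ ((m+1) * n)) :
    Solvable (completeBipartiteGraph (Fin m) (Fin n)).Adj q := by
  classical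
  obtain ⟨h, hgood⟩ := exists_good_h q m n (m+1) (by omega) hKm hcount
  apply solvable_of_exists (by omega)
  refine ⟨h, fun b => ?_⟩
  set S := Finset.univ.filter (fun a : Fin m → Fin q => ∀ v, b v ≠ h a v) with hSdef
  have hScard : S.card ≤ m := by
    by_contra hbig
    push_neg at hbig
    obtain ⟨t, hts, htcard⟩ := S.exists_subset_card_eq (n := m+1) (by omega)
    have e : Fin (m+1) ≃ {x // x ∈ t} :=
      (Fintype.equivFinOfCardEq (by rw [Fintype.card_coe, htcard])).symm
    have einj : Function.Injective (fun i => (e i).1) :=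
      fun i j hij => e.injective (Subtype.ext hij)
    obtain ⟨v, hv⟩ := hgood ⟨fun i => (e i).1, einj⟩
    obtain ⟨i, hi⟩ := hv (b v)
    have hmem : (e i).1 ∈ S := hts (e i).2
    rw [hSdef, Finset.mem_filter] at hmem
    exact hmem.2 v hi.symm
  obtain ⟨c, hc⟩ := exists_transversal (by omega) S hScard
  refine ⟨c, fun a hav => hc a ?_⟩
  rw [hSdef, Finset.mem_filter]
  exact ⟨Finset.mem_univ _, hav⟩

/-- Crude bound on the number of non-surjective maps `Fin K → Fin q`. -/
lemma card_nonsurj_le (q K : ℕ) :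
    Fintype.card {t : Fin K → Fin q // ¬ Function.Surjective t} ≤ q * (q - 1) ^ K := by
  classical
  rw [Fintype.card_subtype]
  have hsub : (Finset.univ.filter fun t : Fin K → Fin q => ¬ Function.Surjective t) ⊆
      Finset.univ.biUnion (fun y : Fin q =>
        Finset.univ.filter (fun t : Fin K → Fin q => ∀ i, t i ≠ y)) := by
    intro t ht
    rw [Finset.mem_filter] at ht
    have := ht.2
    rw [Function.Surjective] at this
    push_neg at this
    obtain ⟨y, hy⟩ := this
    refine Finset.mem_biUnion.2 ⟨y, Finset.mem_univ _, ?_⟩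
    rw [Finset.mem_filter]
    exact ⟨Finset.mem_univ _, fun i hi => hy i hi⟩
  calc (Finset.univ.filter fun t : Fin K → Fin q => ¬ Function.Surjective t).card
      ≤ (Finset.univ.biUnion (fun y : Fin q =>
          Finset.univ.filter (fun t : Fin K → Fin q => ∀ i, t i ≠ y))).card :=
        Finset.card_le_card hsub
    _ ≤ ∑ y : Fin q, (Finset.univ.filter (fun t : Fin K → Fin q => ∀ i, t i ≠ y)).card :=
        Finset.card_biUnion_le
    _ ≤ ∑ _y : Fin q, (q - 1) ^ K := by
        refine Finset.sum_le_sum (fun y _ => ?_)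
        rw [← Fintype.card_subtype]
        have e : {t : Fin K → Fin q // ∀ i, t i ≠ y} ≃ (Fin K → {z : Fin q // z ≠ y}) :=
          Equiv.subtypePiEquivPi (α := Fin K) (β := fun _ => Fin q) (p := fun _ z => z ≠ y)
        rw [Fintype.card_congr e, Fintype.card_fun]
        have : Fintype.card {z : Fin q // z ≠ y} = q - 1 := by
          rw [Fintype.card_subtype_compl, Fintype.card_subtype_eq, Fintype.card_fin]
        rw [this, Fintype.card_fin]
    _ = q * (q - 1) ^ K := by
        rw [Finset.sum_const, Finset.card_univ, Fintype.card_fin, smul_eq_mul]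

/-- The number of non-surjective self-maps of `Fin q`. -/
lemma card_nonsurj_eq (q : ℕ) :
    Fintype.card {t : Fin q → Fin q // ¬ Function.Surjective t} = q ^ q - q.factorial := by
  classical
  rw [Fintype.card_subtype_compl]
  congr 1
  · simp [Fintype.card_fun]
  · have e1 : {t : Fin q → Fin q // Function.Surjective t}
        ≃ {t : Fin q → Fin q // Function.Bijective t} :=
      Equiv.subtypeEquivRight (fun t => Finite.surjective_iff_bijective)
    have e2 : {t : Fin q → Fin q // Function.Bijective t} ≃ Equiv.Perm (Fin q) :=
      { toFun := fun t => Equiv.ofBijective t.1 t.2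
        invFun := fun p => ⟨p, p.bijective⟩
        left_inv := fun t => Subtype.ext rfl
        right_inv := fun p => Equiv.ext (fun x => rfl) }
    rw [Fintype.card_congr (e1.trans e2), Fintype.card_perm, Fintype.card_fin]

end Glue
section Analytic

open Real

lemma sqrt_pi_le_stirlingSeq {q : ℕ} (hq : 1 ≤ q) : Real.sqrt π ≤ Stirling.stirlingSeq q := by
  obtain ⟨k, rfl⟩ : ∃ k, q = k + 1 := ⟨q - 1, by omega⟩
  refine le_of_tendsto Stirling.tendsto_stirlingSeq_sqrt_pi ?_
  filter_upwards [Filter.eventually_ge_atTop (k + 1)] with j hj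
  obtain ⟨i, rfl⟩ : ∃ i, j = i + 1 := ⟨j - 1, by omega⟩
  exact Stirling.stirlingSeq'_antitone (show k ≤ i by omega)

/-- Elementary consequence of Stirling: `√(2q)·q^q ≤ e^q·q!`. -/
lemma factorial_lb (q : ℕ) (hq : 1 ≤ q) :
    Real.sqrt (2 * q) * (q : ℝ) ^ q ≤ Real.exp q * (q.factorial : ℝ) := by
  have hQ0 : (0 : ℝ) < q := by exact_mod_cast hq
  have hst := sqrt_pi_le_stirlingSeq hq
  have hone : (1 : ℝ) ≤ Real.sqrt π := by
    rw [show (1 : ℝ) = Real.sqrt 1 by simp]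
    exact Real.sqrt_le_sqrt (by nlinarith [Real.pi_gt_three])
  have h1 : (1 : ℝ) ≤ Stirling.stirlingSeq q := le_trans hone hst
  rw [Stirling.stirlingSeq] at h1
  have hpos : 0 < Real.sqrt (2 * q) * ((q : ℝ) / Real.exp 1) ^ q := by positivity
  rw [le_div_iff₀ hpos, one_mul] at h1
  have hdiv : ((q : ℝ) / Real.exp 1) ^ q = (q : ℝ) ^ q / Real.exp q := by
    rw [div_pow, Real.exp_one_pow]
  rw [hdiv] at h1
  have hexp : (0 : ℝ) < Real.exp q := Real.exp_pos _
  calc Real.sqrt (2 * q) * (q : ℝ) ^ q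
      = Real.exp q * (Real.sqrt (2 * q) * ((q : ℝ) ^ q / Real.exp q)) := by
        field_simp
    _ ≤ Real.exp q * (q.factorial : ℝ) := by
        apply mul_le_mul_of_nonneg_left _ hexp.le
        rw [← mul_div_assoc] at h1 ⊢
        exact h1

/-- The counting condition needed for part (i). -/
lemma count_one (q n : ℕ) (hq : 2 ≤ q)
    (hn : Real.exp q * (q : ℝ) ^ ((3 : ℝ) / 2) * Real.log q ≤ n) :
    Fintype.card (Fin q ↪ (Fin (q - 1) → Fin q)) *
      (Fintype.card {t : Fin q → Fin q // ¬ Function.Surjective t}) ^ n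
      < q ^ (q * n) := by
  classical
  have hT : Fintype.card (Fin q ↪ (Fin (q - 1) → Fin q)) ≤ (q ^ (q - 1)) ^ q := by
    rw [Fintype.card_embedding_eq, Fintype.card_fin, Fintype.card_fun, Fintype.card_fin,
      Fintype.card_fin]
    exact Nat.descFactorial_le_pow _ _
  rw [card_nonsurj_eq]
  have hfle : q.factorial ≤ q ^ q := Nat.factorial_le_pow q
  apply lt_of_le_of_lt (Nat.mul_le_mul_right _ hT)
  rw [← Nat.cast_lt (α := ℝ)]
  push_cast [Nat.cast_sub hfle]
  -- real inequality
  have hQ1 : (1 : ℝ) < (q : ℝ) := by exact_mod_cast hq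
  have hQ0 : (0 : ℝ) < (q : ℝ) := by linarith
  have hL0 : 0 < Real.log q := Real.log_pos hQ1
  set s : ℝ := (q.factorial : ℝ) / (q : ℝ) ^ q with hsdef
  have hfact0 : (0 : ℝ) < (q.factorial : ℝ) := by exact_mod_cast q.factorial_pos
  have hQq0 : (0 : ℝ) < (q : ℝ) ^ q := pow_pos hQ0 q
  have hs0 : 0 < s := div_pos hfact0 hQq0
  have hs1 : s ≤ 1 := by
    rw [hsdef, div_le_one hQq0]
    exact_mod_cast hfle
  have hsub : (q : ℝ) ^ q - (q.factorial : ℝ) = (q : ℝ) ^ q * (1 - s) := by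
    rw [hsdef, mul_sub, mul_one, mul_div_assoc', mul_div_cancel_left₀ _ hQq0.ne']
  have hs_lb : Real.sqrt (2 * q) / Real.exp q ≤ s := by
    have h := factorial_lb q (by omega)
    rw [div_le_iff₀ (Real.exp_pos _), hsdef, div_mul_eq_mul_div, le_div_iff₀ hQq0]
    calc Real.sqrt (2 * q) * (q : ℝ) ^ q ≤ Real.exp q * (q.factorial : ℝ) := h
      _ = (q.factorial : ℝ) * Real.exp q := by rw [mul_comm]
  have hQ32 : (q : ℝ) ^ ((3 : ℝ) / 2) * (q : ℝ) ^ ((1 : ℝ) / 2) = (q : ℝ) ^ (2 : ℕ) := by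
    rw [← Real.rpow_add hQ0, ← Real.rpow_natCast (q : ℝ) 2]
    norm_num
  have h2Q : Real.sqrt (2 * q) = Real.sqrt 2 * (q : ℝ) ^ ((1 : ℝ) / 2) := by
    rw [Real.sqrt_mul (by norm_num) (q : ℝ), Real.sqrt_eq_rpow (q : ℝ)]
  -- key: ((q-1)*q) * L < n * s
  have hcore : (((q - 1) * q : ℕ) : ℝ) * Real.log q < (n : ℝ) * s := by
    have hns : Real.sqrt 2 * (q : ℝ) ^ (2 : ℕ) * Real.log q ≤ (n : ℝ) * s := by
      have hmul : (Real.exp q * (q : ℝ) ^ ((3 : ℝ) / 2) * Real.log q)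
            * (Real.sqrt (2 * q) / Real.exp q) ≤ (n : ℝ) * s :=
        mul_le_mul hn hs_lb (by positivity) (by positivity)
      refine le_trans (le_of_eq ?_) hmul
      rw [h2Q, ← hQ32]
      have he : Real.exp (q : ℝ) ≠ 0 := (Real.exp_pos _).ne'
      field_simp
    have hcast : (((q - 1) * q : ℕ) : ℝ) = ((q : ℝ) - 1) * (q : ℝ) := by
      push_cast [Nat.cast_sub (by omega : 1 ≤ q)]
      ring
    rw [hcast]
    have hsqrt2 : (1 : ℝ) < Real.sqrt 2 := by
      rw [show (1 : ℝ) = Real.sqrt 1 by simp]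
      exact Real.sqrt_lt_sqrt (by norm_num) (by norm_num)
    have hlt : ((q : ℝ) - 1) * (q : ℝ) * Real.log q
        < Real.sqrt 2 * (q : ℝ) ^ (2 : ℕ) * Real.log q := by
      apply mul_lt_mul_of_pos_right _ hL0
      nlinarith
    linarith
  have hexp_eq : ((q : ℝ)) ^ ((q - 1) * q) = Real.exp ((((q - 1) * q : ℕ) : ℝ) * Real.log q) := by
    rw [Real.exp_nat_mul, Real.exp_log hQ0]
  have key : ((q : ℝ) ^ (q - 1)) ^ q * (1 - s) ^ n < 1 := by
    have h1s : (0 : ℝ) ≤ 1 - s := by linarith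
    have hpow : (1 - s) ^ n ≤ Real.exp (-((n : ℝ) * s)) := by
      calc (1 - s) ^ n ≤ (Real.exp (-s)) ^ n := by
            apply pow_le_pow_left₀ h1s
            linarith [Real.add_one_le_exp (-s)]
        _ = Real.exp (-((n : ℝ) * s)) := by
            rw [← Real.exp_nat_mul]
            ring_nf
    calc ((q : ℝ) ^ (q - 1)) ^ q * (1 - s) ^ n
        ≤ ((q : ℝ) ^ (q - 1)) ^ q * Real.exp (-((n : ℝ) * s)) := by
          apply mul_le_mul_of_nonneg_left hpow (by positivity)
      _ = Real.exp ((((q - 1) * q : ℕ) : ℝ) * Real.log q - (n : ℝ) * s) := by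
          rw [← pow_mul, hexp_eq, ← Real.exp_add]
          ring_nf
      _ < 1 := by
          rw [Real.exp_lt_one_iff]
          linarith
  calc ((q : ℝ) ^ (q - 1)) ^ q * ((q : ℝ) ^ q - (q.factorial : ℝ)) ^ n
      = ((q : ℝ) ^ (q - 1)) ^ q * (1 - s) ^ n * ((q : ℝ) ^ q) ^ n := by
        rw [hsub, mul_pow]
        ring
    _ < 1 * ((q : ℝ) ^ q) ^ n := mul_lt_mul_of_pos_right key (by positivity)
    _ = (q : ℝ) ^ (q * n) := by rw [one_mul, ← pow_mul]

end Analytic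
section CountTwo

open Real

/-- The counting condition needed for part (ii). -/
lemma count_two (q m n : ℕ) (hq : 2 ≤ q)
    (hm : 2 * (q : ℝ) * Real.log q ≤ m)
    (hn : (m : ℝ) * ((m : ℝ) + 1) ≤ n) :
    Fintype.card (Fin (m + 1) ↪ (Fin m → Fin q)) *
      (Fintype.card {t : Fin (m + 1) → Fin q // ¬ Function.Surjective t}) ^ n
      < q ^ ((m + 1) * n) := by
  classical
  have hT : Fintype.card (Fin (m + 1) ↪ (Fin m → Fin q)) ≤ (q ^ m) ^ (m + 1) := by
    rw [Fintype.card_embedding_eq, Fintype.card_fin, Fintype.card_fun, Fintype.card_fin,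
      Fintype.card_fin]
    exact Nat.descFactorial_le_pow _ _
  have hNS := card_nonsurj_le q (m + 1)
  apply lt_of_le_of_lt (Nat.mul_le_mul hT (Nat.pow_le_pow_left hNS n))
  rw [← Nat.cast_lt (α := ℝ)]
  push_cast [Nat.cast_sub (by omega : 1 ≤ q)]
  -- real inequality
  have hQ1 : (1 : ℝ) < (q : ℝ) := by exact_mod_cast hq
  have hQ0 : (0 : ℝ) < (q : ℝ) := by linarith
  have hP0 : (0 : ℝ) < (q : ℝ) - 1 := by linarith
  have hL0 : 0 < Real.log q := Real.log_pos hQ1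
  have hlog2 : (0.6931471803 : ℝ) < Real.log 2 := Real.log_two_gt_d9
  have hL2 : Real.log 2 ≤ Real.log q := Real.log_le_log (by norm_num) (by exact_mod_cast hq)
  have hM1 : (1 : ℝ) ≤ (m : ℝ) := by nlinarith
  have hN0 : (0 : ℝ) < (n : ℝ) := by nlinarith
  -- facts
  have A1 : (q : ℝ) * Real.log ((q : ℝ) - 1) + 1 ≤ (q : ℝ) * Real.log q := by
    have hdiv : (0 : ℝ) < ((q : ℝ) - 1) / (q : ℝ) := div_pos hP0 hQ0
    have h := Real.log_le_sub_one_of_pos hdiv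
    rw [Real.log_div hP0.ne' hQ0.ne'] at h
    have h2 : (((q : ℝ) - 1) / (q : ℝ) - 1) * (q : ℝ) = -1 := by field_simp; ring
    nlinarith
  have A2 : 2 * (q : ℝ) * Real.log q + 1 ≤ (m : ℝ) + 1 := by linarith
  -- rewrite as exponentials
  have eQ : ∀ k : ℕ, ((q : ℝ)) ^ k = Real.exp ((k : ℝ) * Real.log q) := fun k => by
    rw [Real.exp_nat_mul, Real.exp_log hQ0]
  have eP : ∀ k : ℕ, ((q : ℝ) - 1) ^ k = Real.exp ((k : ℝ) * Real.log ((q : ℝ) - 1)) :=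
    fun k => by rw [Real.exp_nat_mul, Real.exp_log hP0]
  have lhs_eq : (((q : ℝ)) ^ m) ^ (m + 1) * ((q : ℝ) * ((q : ℝ) - 1) ^ (m + 1)) ^ n
      = Real.exp (((m : ℝ) + 1) * ((m : ℝ) * Real.log q)
          + (n : ℝ) * (Real.log q + ((m : ℝ) + 1) * Real.log ((q : ℝ) - 1))) := by
    rw [eQ m, eP (m + 1), ← Real.exp_nat_mul]
    have hq_exp : (q : ℝ) * Real.exp (((m + 1 : ℕ) : ℝ) * Real.log ((q : ℝ) - 1))
        = Real.exp (Real.log q + ((m + 1 : ℕ) : ℝ) * Real.log ((q : ℝ) - 1)) := by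
      rw [Real.exp_add, Real.exp_log hQ0]
    rw [hq_exp, ← Real.exp_nat_mul, ← Real.exp_add]
    congr 1
    push_cast
    ring
  have rhs_eq : ((q : ℝ)) ^ ((m + 1) * n)
      = Real.exp ((((m : ℝ) + 1) * (n : ℝ)) * Real.log q) := by
    rw [eQ ((m + 1) * n)]
    congr 1
    push_cast
    ring
  rw [lhs_eq, rhs_eq, Real.exp_lt_exp]
  -- linear arithmetic
  set M := (m : ℝ)
  set N := (n : ℝ)
  set L := Real.log (q : ℝ)
  set LP := Real.log ((q : ℝ) - 1)
  have h1 : N * (M + 1) * ((q : ℝ) * LP + 1) ≤ N * (M + 1) * ((q : ℝ) * L) :=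
    mul_le_mul_of_nonneg_left A1 (by positivity)
  have h2 : N * (2 * (q : ℝ) * L + 1) ≤ N * (M + 1) :=
    mul_le_mul_of_nonneg_left A2 hN0.le
  have h3 : (M * (M + 1)) * (L * (q : ℝ)) ≤ N * (L * (q : ℝ)) :=
    mul_le_mul_of_nonneg_right hn (by positivity)
  have GQ : ((M + 1) * (M * L) + N * (L + (M + 1) * LP)) * (q : ℝ)
      < ((M + 1) * N * L) * (q : ℝ) := by nlinarith [hN0, hQ0, hL0]
  exact lt_of_mul_lt_mul_right GQ hQ0.le

end CountTwo
/-- (i) There is a constant `c₁ > 0` with `HG(K_{q-1, ⌈c₁ e^q q^{3/2} ln q⌉}) ≥ q` for all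
`q ≥ 2`; (ii) there is a constant `c₂ > 0` with `HG(K_{⌈2q ln q⌉, ⌈c₂ q² (ln q)²⌉}) ≥ q`
for all `q ≥ 2`. -/
theorem stmt16 :
    (∃ c₁ : ℝ, 0 < c₁ ∧ ∀ q : ℕ, 2 ≤ q →
      Solvable (completeBipartiteGraph (Fin (q - 1))
        (Fin ⌈c₁ * Real.exp q * (q : ℝ) ^ ((3 : ℝ) / 2) * Real.log q⌉₊)).Adj q) ∧
    (∃ c₂ : ℝ, 0 < c₂ ∧ ∀ q : ℕ, 2 ≤ q →
      Solvable (completeBipartiteGraph (Fin ⌈2 * (q : ℝ) * Real.log q⌉₊)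
        (Fin ⌈c₂ * (q : ℝ) ^ 2 * Real.log q ^ 2⌉₊)).Adj q) := by
  constructor
  · refine ⟨1, one_pos, fun q hq => ?_⟩
    have hq1 : q - 1 + 1 = q := by omega
    apply solvable_of_count q (q - 1) _ hq
    · rw [hq1]
      exact Nat.le_self_pow (by omega) q
    · rw [hq1]
      apply count_one q _ hq
      simpa using Nat.le_ceil (1 * Real.exp q * (q : ℝ) ^ ((3 : ℝ) / 2) * Real.log q)
  · refine ⟨100, by norm_num, fun q hq => ?_⟩
    have hQ1 : (1 : ℝ) < (q : ℝ) := by exact_mod_cast hq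
    have hL0 : (0 : ℝ) ≤ Real.log q := Real.log_nonneg (by linarith)
    apply solvable_of_count q _ _ hq
    · calc ⌈2 * (q : ℝ) * Real.log q⌉₊ + 1 ≤ 2 ^ ⌈2 * (q : ℝ) * Real.log q⌉₊ := by
            have := Nat.lt_two_pow_self (n := ⌈2 * (q : ℝ) * Real.log q⌉₊)
            omega
        _ ≤ q ^ ⌈2 * (q : ℝ) * Real.log q⌉₊ := Nat.pow_le_pow_left (by omega) _
    · apply count_two q _ _ hq
      · exact Nat.le_ceil _
      · set m := ⌈2 * (q : ℝ) * Real.log q⌉₊ with hmdef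
        have hm_le : (m : ℝ) ≤ 2 * (q : ℝ) * Real.log q + 1 := by
          rw [hmdef]
          exact le_of_lt (Nat.ceil_lt_add_one
            (mul_nonneg (mul_nonneg (by norm_num) (by linarith)) hL0))
        have hlog2 : (0.6931471803 : ℝ) < Real.log 2 := Real.log_two_gt_d9
        have hL2 : Real.log 2 ≤ Real.log q := Real.log_le_log (by norm_num) (by exact_mod_cast hq)
        have hQ2 : (2 : ℝ) ≤ (q : ℝ) := by exact_mod_cast hq
        have hx1 : (1 : ℝ) ≤ (q : ℝ) * Real.log q := by
          have h2 : (2 : ℝ) * Real.log 2 ≤ (q : ℝ) * Real.log q :=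
            mul_le_mul hQ2 hL2 (by linarith) (by linarith)
          linarith
        have hn_ge : (100 : ℝ) * (q : ℝ) ^ 2 * Real.log q ^ 2
            ≤ (⌈(100 : ℝ) * (q : ℝ) ^ 2 * Real.log q ^ 2⌉₊ : ℝ) := Nat.le_ceil _
        have hm0 : (0 : ℝ) ≤ (m : ℝ) := Nat.cast_nonneg m
        have hprod : (m : ℝ) * ((m : ℝ) + 1)
            ≤ (2 * (q : ℝ) * Real.log q + 1) * (2 * (q : ℝ) * Real.log q + 2) := by
          apply mul_le_mul hm_le (by linarith) (by linarith) (by nlinarith)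
        nlinarith [sq_nonneg ((q : ℝ) * Real.log q), hx1, hn_ge, hprod,
          mul_self_nonneg ((q : ℝ) * Real.log q - 1)]
end

section
/- For all positive integers q, m, r, the complete r-partite graph K_{m,…,m} with r parts each of size m (so rm vertices in total) is partially q-solvable with respect to every set of colorings C ⊆ [q]^{rm} with |C| ≤ m^r. -/
/-- A graph is partially `q`-solvable with respect to a set `C` of colorings if there is a
guessing strategy guaranteeing a correct guess for every coloring in `C`. -/
def PartiallySolvable {V : Type*} (Adj : V → V → Prop) (q : ℕ) (C : Set (V → Fin q)) : Prop :=
  ∃ g : V → (V → Fin q) → Fin q, IsHatStrategy Adj q g ∧ ∀ x ∈ C, ∃ v, g v x = x v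

theorem key_lemma (m : ℕ) (B : Type) (b0 : B) :
    ∀ (n : ℕ) (ι : Type) [Fintype ι] [DecidableEq ι], Nonempty ι →
      Fintype.card ι = n → ∀ C : Finset (ι → Fin m → B), C.card ≤ m ^ n →
      ∃ h : ι → (ι → Fin m → B) → Fin m → B,
        (∀ i x y, (∀ k, k ≠ i → x k = y k) → h i x = h i y) ∧
        (∀ x ∈ C, ∃ i j, h i x j = x i j) := by
  intro n
  induction n with
  | zero =>
    intro ι _ _ hne hcard C hC
    exact absurd (hcard ▸ Fintype.card_pos) (lt_irrefl 0)
  | succ n ih =>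
    intro ι _ _ hne hcard C hC
    classical
    obtain ⟨i0⟩ := hne
    -- the list of candidates consistent with the view off i0
    set L : (ι → Fin m → B) → List (ι → Fin m → B) :=
      fun x => (C.filter (fun c => ∀ k, k ≠ i0 → c k = x k)).toList with hL
    have Lcongr : ∀ x y : ι → Fin m → B, (∀ k, k ≠ i0 → x k = y k) → L x = L y := by
      intro x y hxy
      simp only [hL]
      congr 1
      apply Finset.filter_congr
      intro c _
      constructor
      · intro h k hk; rw [h k hk, hxy k hk]
      · intro h k hk; rw [h k hk, ← hxy k hk]
    have memL : ∀ x ∈ C, x ∈ L x := by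
      intro x hx
      simp [hL, Finset.mem_toList, Finset.mem_filter, hx]

    -- the guess of part i0
    set G : List (ι → Fin m → B) → Fin m → B := fun l j =>
      if hj : (j : ℕ) < l.length then l.get ⟨j, hj⟩ i0 j else b0 with hG
    -- the bad set
    set Bad : Finset (ι → Fin m → B) := C.filter (fun x => m ≤ (L x).idxOf x) with hBad
    set ι' := {k : ι // k ≠ i0}
    set ρ : (ι → Fin m → B) → (ι' → Fin m → B) := fun x k => x k.1 with hρ
    set S : Finset (ι' → Fin m → B) := Bad.image ρ with hS
    -- size of classes of bad elements
    have classbig : ∀ v ∈ S, m + 1 ≤ (C.filter (fun c => ρ c = v)).card := by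
      intro v hv
      simp only [hS, Finset.mem_image] at hv
      obtain ⟨x, hxB, rfl⟩ := hv
      simp only [hBad, Finset.mem_filter] at hxB
      obtain ⟨hxC, hxidx⟩ := hxB
      have hfe : C.filter (fun c => ρ c = ρ x) = C.filter (fun c => ∀ k, k ≠ i0 → c k = x k) := by
        apply Finset.filter_congr
        intro c _
        constructor
        · intro h k hk
          exact congrFun h ⟨k, hk⟩
        · intro h
          funext k
          exact h k.1 k.2
      rw [hfe]
      have h1 : (L x).idxOf x < (L x).length := List.idxOf_lt_length_iff.2 (memL x hxC)
      have h2 : (C.filter (fun c => ∀ k, k ≠ i0 → c k = x k)).card = (L x).length := by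
        rw [congrFun hL x]
        exact (Finset.length_toList _).symm
      rw [h2]
      exact Nat.succ_le_of_lt (lt_of_le_of_lt hxidx h1)
    -- bound on number of bad classes
    have hScard : S.card ≤ m ^ n := by
      set T : Finset (ι → Fin m → B) := C.filter (fun c => ρ c ∈ S) with hT
      have hT1 : T.card = ∑ v ∈ S, (T.filter (fun c => ρ c = v)).card :=
        Finset.card_eq_sum_card_fiberwise (fun c hc => (Finset.mem_filter.1 hc).2)
      have hT2 : ∀ v ∈ S, m + 1 ≤ (T.filter (fun c => ρ c = v)).card := by
        intro v hv
        refine le_trans (classbig v hv) (Finset.card_le_card ?_)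
        intro c hc
        rw [Finset.mem_filter] at hc
        rw [Finset.mem_filter, hT, Finset.mem_filter]
        exact ⟨⟨hc.1, hc.2 ▸ hv⟩, hc.2⟩
      have hT3 : S.card * (m + 1) ≤ T.card := by
        rw [hT1]
        calc S.card * (m+1) = ∑ _v ∈ S, (m+1) := by rw [Finset.sum_const, smul_eq_mul, mul_comm]
        _ ≤ _ := Finset.sum_le_sum hT2
      have hT4 : T.card ≤ C.card := Finset.card_le_card (Finset.filter_subset _ _)
      have : S.card * (m + 1) ≤ m ^ n * (m + 1) := by
        calc S.card * (m+1) ≤ C.card := le_trans hT3 hT4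
        _ ≤ m ^ (n+1) := hC
        _ ≤ m ^ n * (m+1) := by rw [pow_succ]; exact Nat.mul_le_mul_left _ (Nat.le_succ m)
      exact Nat.le_of_mul_le_mul_right this (Nat.succ_pos m)
    -- obtain inner strategy from induction hypothesis
    have hinner : ∃ h' : ι' → (ι' → Fin m → B) → Fin m → B,
        (∀ i x y, (∀ k, k ≠ i → x k = y k) → h' i x = h' i y) ∧
        (∀ v ∈ S, ∃ i j, h' i v j = v i j) := by
      rcases Finset.eq_empty_or_nonempty S with hSe | hSne
      · exact ⟨fun _ _ _ => b0, fun _ _ _ _ => rfl, by simp [hSe]⟩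
      · have hn : n ≠ 0 := by
          rintro rfl
          obtain ⟨v, hv⟩ := hSne
          have h3 := classbig v hv
          have h4 : (C.filter (fun c => ρ c = v)).card ≤ C.card :=
            Finset.card_le_card (Finset.filter_subset _ _)
          rw [pow_one] at hC
          exact absurd (le_trans h3 (le_trans h4 hC)) (Nat.not_succ_le_self m)
        have hcard' : Fintype.card ι' = n := by
          have : Fintype.card ι' = Fintype.card ι - Fintype.card {k : ι // k = i0} :=
            Fintype.card_subtype_compl _
          rw [this, Fintype.card_subtype_eq, hcard]; omega
        have hne' : Nonempty ι' := Fintype.card_pos_iff.1 (by rw [hcard']; omega)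
        exact ih ι' hne' hcard' S hScard
    obtain ⟨h', hdep', hcov'⟩ := hinner
    refine ⟨fun i x => if hi : i = i0 then G (L x) else h' ⟨i, hi⟩ (ρ x), ?_, ?_⟩
    · intro i x y hxy
      beta_reduce
      by_cases hi : i = i0
      · subst hi
        rw [dif_pos rfl, dif_pos rfl]
        exact congrArg G (Lcongr x y hxy)
      · rw [dif_neg hi, dif_neg hi]
        apply hdep'
        intro k hk
        simp only [hρ]
        apply hxy
        intro hki
        exact hk (Subtype.ext hki)
    · intro x hx
      beta_reduce
      by_cases hidx : (L x).idxOf x < m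
      · refine ⟨i0, ⟨(L x).idxOf x, hidx⟩, ?_⟩
        rw [dif_pos rfl]
        have hlt : (L x).idxOf x < (L x).length := List.idxOf_lt_length_iff.2 (memL x hx)
        have hget : (L x).get ⟨(L x).idxOf x, hlt⟩ = x := List.idxOf_get hlt
        simp only [hG]
        rw [dif_pos hlt, hget]
      · have hxB : x ∈ Bad := by
          rw [hBad, Finset.mem_filter]
          exact ⟨hx, le_of_not_gt hidx⟩
        have hvS : ρ x ∈ S := by
          rw [hS]
          exact Finset.mem_image_of_mem ρ hxB
        obtain ⟨i', j, hij⟩ := hcov' (ρ x) hvS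
        refine ⟨i'.1, j, ?_⟩
        rw [dif_neg i'.2]
        exact hij

/-- For all positive `q, m, r`, the complete `r`-partite graph with `r` parts of size `m`
(vertices `Fin r × Fin m`, adjacency iff different first coordinates) is partially
`q`-solvable with respect to every set of colorings of size at most `m^r`. -/
theorem stmt17 (q m r : ℕ) (hq : 0 < q) (hm : 0 < m) (hr : 0 < r)
    (C : Set ((Fin r × Fin m) → Fin q)) (hC : C.ncard ≤ m ^ r) :
    PartiallySolvable (fun v w : Fin r × Fin m => v.1 ≠ w.1) q C := by
  classical
  have hCfin : C.Finite := Set.toFinite C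
  set curry : ((Fin r × Fin m) → Fin q) → (Fin r → Fin m → Fin q) :=
    fun x i j => x (i, j) with hcur
  have hIfin : (curry '' C).Finite := hCfin.image curry
  set C' : Finset (Fin r → Fin m → Fin q) := hIfin.toFinset with hC'
  have hcard : C'.card ≤ m ^ r := by
    rw [hC', ← Set.ncard_eq_toFinset_card]
    exact le_trans (Set.ncard_image_le hCfin) hC
  obtain ⟨h, hdep, hcov⟩ := key_lemma m (Fin q) ⟨0, hq⟩ r (Fin r) ⟨⟨0, hr⟩⟩
    (Fintype.card_fin r) C' hcard
  unfold PartiallySolvable IsHatStrategy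
  refine ⟨fun v x => h v.1 (curry x) v.2, ?_, ?_⟩
  · intro v x y hxy
    have : curry x = curry y ∨ True := Or.inr trivial
    have hd := hdep v.1 (curry x) (curry y) ?_
    · show h v.1 (curry x) v.2 = h v.1 (curry y) v.2
      rw [hd]
    · intro k hk
      funext j
      exact hxy (k, j) (Ne.symm hk)
  · intro x hx
    have hx' : curry x ∈ C' := by
      rw [hC', Set.Finite.mem_toFinset]
      exact ⟨x, hx, rfl⟩
    obtain ⟨i, j, hij⟩ := hcov _ hx'
    exact ⟨(i, j), hij⟩
end

section
/- Let q, m, n, r, t be positive integers with r ≥ 2 and t ≤ m^{r−1}. If there exists an n × q^{(r−1)m} matrix with entries in [q] that is t-saturated, then the complete r-partite graph K_{m,…,m,n} with r−1 parts of size m and one part of size n is q-solvable. -/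
open Finset

/-- Adjacency of the complete `(r+1)`-partite graph with `r` parts of size `m`
(indexed by `Fin r × Fin m`) and one part of size `n` (indexed by `Fin n`):
two vertices are adjacent iff they lie in different parts. -/
def MultipartitePlusAdj (r m n : ℕ) :
    ((Fin r × Fin m) ⊕ Fin n) → ((Fin r × Fin m) ⊕ Fin n) → Prop
  | Sum.inl a, Sum.inl b => a.1 ≠ b.1
  | Sum.inl _, Sum.inr _ => True
  | Sum.inr _, Sum.inl _ => True
  | Sum.inr _, Sum.inr _ => False

lemma rank_lt_of_lt {α : Type*} [DecidableEq α] (F : Finset α) (g : α → ℕ) {c c' : α}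
    (hc : c ∈ F) (hlt : g c < g c') :
    (F.filter fun d => g d < g c).card < (F.filter fun d => g d < g c').card := by
  apply Finset.card_lt_card
  rw [Finset.ssubset_iff_of_subset]
  · exact ⟨c, Finset.mem_filter.mpr ⟨hc, hlt⟩, by simp⟩
  · intro d hd
    rw [Finset.mem_filter] at hd ⊢
    exact ⟨hd.1, hd.2.trans hlt⟩

lemma rank_lt_card {α : Type*} [DecidableEq α] (F : Finset α) (g : α → ℕ) {c : α} (hc : c ∈ F) :
    (F.filter fun d => g d < g c).card < F.card := by
  apply Finset.card_lt_card
  rw [Finset.ssubset_iff_of_subset (Finset.filter_subset _ _)]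
  exact ⟨c, hc, by simp⟩

lemma rank_inj {α : Type*} [DecidableEq α] (F : Finset α) (g : α → ℕ)
    (hinj : ∀ a ∈ F, ∀ b ∈ F, g a = g b → a = b) {c c' : α} (hc : c ∈ F) (hc' : c' ∈ F)
    (h : (F.filter fun d => g d < g c).card = (F.filter fun d => g d < g c').card) : c = c' := by
  rcases lt_trichotomy (g c) (g c') with hlt | heq | hlt
  · exact absurd h (Nat.ne_of_lt (rank_lt_of_lt F g hc hlt))
  · exact hinj c hc c' hc' heq
  · exact absurd h.symm (Nat.ne_of_lt (rank_lt_of_lt F g hc' hlt))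

lemma rescue {X : Type*} (m : ℕ) :
    ∀ (r : ℕ) (S : Finset (Fin (r + 1) → X)), S.card ≤ m ^ (r + 1) →
    ∃ (ord : (Fin (r + 1) → X) → ℕ) (φ : (Fin (r + 1) → X) → Fin (r + 1) → ℕ),
      ∀ c ∈ S, ∃ i : Fin (r + 1), φ c i < m ∧
        ∀ c' ∈ S, c' ≠ c → (∀ j, j ≠ i → c' j = c j) → φ c' i = φ c i →
          ord c < ord c' := by
  intro r
  induction r with
  | zero =>
    intro S hS
    classical
    set gidx : (Fin 1 → X) → ℕ := fun c => if h : c ∈ S then (S.equivFin ⟨c, h⟩ : ℕ) else 0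
      with hgidx
    have hinj : ∀ a ∈ S, ∀ b ∈ S, gidx a = gidx b → a = b := by
      intro a ha b hb hab
      simp only [hgidx, dif_pos ha, dif_pos hb] at hab
      have := S.equivFin.injective (Fin.val_injective hab)
      exact Subtype.ext_iff.mp this
    refine ⟨fun _ => 0, fun c _ => (S.filter fun d => gidx d < gidx c).card, ?_⟩
    intro c hc
    refine ⟨0, ?_, ?_⟩
    · exact lt_of_lt_of_le (rank_lt_card S gidx hc) (by simpa using hS)
    · intro c' hc' hne hagree hφ
      exact absurd (rank_inj S gidx hinj hc' hc hφ) hne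
  | succ r ih =>
    intro S hS
    classical
    set π : (Fin (r + 2) → X) → (Fin (r + 1) → X) := fun c => fun j => c j.castSucc with hπ
    set P : Finset (Fin (r + 1) → X) :=
      (S.image π).filter (fun p => m < (S.filter (fun d => π d = p)).card) with hP
    have hPcard : P.card ≤ m ^ (r + 1) := by
      by_contra hlt
      push_neg at hlt
      have h1 : P.card • (m + 1) ≤ ∑ p ∈ P, (S.filter (fun d => π d = p)).card := by
        apply Finset.card_nsmul_le_sum
        intro p hp
        exact (Finset.mem_filter.mp hp).2
      have h2 : ∑ p ∈ P, (S.filter (fun d => π d = p)).card ≤ S.card := by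
        rw [Finset.card_eq_sum_card_fiberwise (fun c hc => Finset.mem_image_of_mem π hc)]
        exact Finset.sum_le_sum_of_subset (Finset.filter_subset _ _)
      have h3 : m ^ (r + 1 + 1) = m ^ (r + 1) * m := pow_succ m (r + 1)
      simp only [smul_eq_mul] at h1
      have h4 : (m ^ (r + 1) + 1) * (m + 1) ≤ P.card * (m + 1) :=
        Nat.mul_le_mul_right _ (Nat.succ_le_of_lt hlt)
      have h5 := le_trans h4 (le_trans h1 (le_trans h2 hS))
      rw [h3] at h5
      have hexp : (m ^ (r + 1) + 1) * (m + 1) = m ^ (r + 1) * m + m ^ (r + 1) + m + 1 := by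
        ring
      rw [hexp] at h5
      generalize m ^ (r + 1) * m = A at h5
      generalize m ^ (r + 1) = B at h5
      omega
    obtain ⟨ord₀, φ₀, hprot₀⟩ := ih P hPcard
    set gidx : (Fin (r + 2) → X) → ℕ := fun c => if h : c ∈ S then (S.equivFin ⟨c, h⟩ : ℕ) else 0
      with hgidx
    have hginj : ∀ a ∈ S, ∀ b ∈ S, gidx a = gidx b → a = b := by
      intro a ha b hb hab
      simp only [hgidx, dif_pos ha, dif_pos hb] at hab
      have := S.equivFin.injective (Fin.val_injective hab)
      exact Subtype.ext_iff.mp this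
    set Fib : (Fin (r + 2) → X) → Finset (Fin (r + 2) → X) :=
      fun c => S.filter (fun d => π d = π c) with hFib
    set ν : (Fin (r + 2) → X) → ℕ :=
      fun c => ((Fib c).filter (fun d => gidx d < gidx c)).card with hν
    refine ⟨fun c => if π c ∈ P then ord₀ (π c) else P.sup ord₀ + 1,
            fun c => fun j => Fin.lastCases (if π c ∈ P then 0 else ν c)
              (fun j₀ => if π c ∈ P then φ₀ (π c) j₀ else 0) j, ?_⟩
    intro c hc
    by_cases hbig : π c ∈ P
    · obtain ⟨i₀, hφ₀lt, hmin₀⟩ := hprot₀ (π c) hbig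
      refine ⟨i₀.castSucc, ?_, ?_⟩
      · simpa [Fin.lastCases_castSucc, hbig] using hφ₀lt
      · intro c' hc' hne hagree hφ
        have hπne : π c' ≠ π c := by
          intro hπeq
          apply hne
          funext j
          refine Fin.lastCases ?_ ?_ j
          · exact hagree (Fin.last _) (Fin.castSucc_lt_last i₀).ne'
          · intro j₀
            exact congrFun hπeq j₀
        by_cases hbig' : π c' ∈ P
        · have hagree₀ : ∀ j₀ : Fin (r + 1), j₀ ≠ i₀ → π c' j₀ = π c j₀ := by
            intro j₀ hj₀
            exact hagree j₀.castSucc (fun hh => hj₀ (Fin.castSucc_injective _ hh))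
          have hφ₀eq : φ₀ (π c') i₀ = φ₀ (π c) i₀ := by
            simpa [Fin.lastCases_castSucc, hbig, hbig'] using hφ
          have := hmin₀ (π c') hbig' hπne hagree₀ hφ₀eq
          simpa [hbig, hbig'] using this
        · simp only [if_pos hbig, if_neg hbig']
          exact lt_of_le_of_lt (Finset.le_sup hbig) (Nat.lt_succ_self _)
    · refine ⟨Fin.last _, ?_, ?_⟩
      · have hmem : π c ∈ S.image π := Finset.mem_image_of_mem _ hc
        have hsmall : ¬ m < (S.filter (fun d => π d = π c)).card := by
          intro hlt; exact hbig (Finset.mem_filter.mpr ⟨hmem, hlt⟩)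
        push_neg at hsmall
        have hcFib : c ∈ Fib c := Finset.mem_filter.mpr ⟨hc, rfl⟩
        have hrk := rank_lt_card (Fib c) gidx hcFib
        have hFc : (Fib c).card ≤ m := by
          rw [hFib]; exact hsmall
        simp only [Fin.lastCases_last, if_neg hbig, hν]
        omega
      · intro c' hc' hne hagree hφ
        exfalso
        have hπeq : π c' = π c := by
          funext j₀
          exact hagree j₀.castSucc (Fin.castSucc_lt_last j₀).ne
        have hbig' : π c' ∉ P := by rwa [hπeq]
        have hφ' : ν c' = ν c := by
          simpa [Fin.lastCases_last, if_neg hbig, if_neg hbig'] using hφ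
        have hFibEq : Fib c' = Fib c := by
          simp only [hFib, hπeq]
        have hc'Fib : c' ∈ Fib c := Finset.mem_filter.mpr ⟨hc', hπeq⟩
        have hcFib : c ∈ Fib c := Finset.mem_filter.mpr ⟨hc, rfl⟩
        have hinjF : ∀ a ∈ Fib c, ∀ b ∈ Fib c, gidx a = gidx b → a = b := by
          intro a ha b hb
          exact hginj a (Finset.mem_filter.mp ha).1 b (Finset.mem_filter.mp hb).1
        apply hne
        apply rank_inj (Fib c) gidx hinjF hc'Fib hcFib
        simp only [hν, hFibEq] at hφ'
        exact hφ'

lemma core (q m n R t L : ℕ) (hq : 0 < q) (hm : 0 < m) (htm : t ≤ m ^ (R + 1))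
    (hLdef : L = q ^ ((R + 1) * m))
    (M : Matrix (Fin n) (Fin L) (Fin q)) (hM : Saturated M t) :
    Solvable (MultipartitePlusAdj (R + 1) m n) q := by
  classical
  have hL : 0 < L := hLdef ▸ pow_pos hq _
  have hcard : Fintype.card (Fin (R + 1) × Fin m → Fin q) = L := by
    rw [hLdef]; simp [Fintype.card_fun]
  set e : (Fin (R + 1) × Fin m → Fin q) ≃ Fin L := Fintype.equivFinOfCardEq hcard with he
  set j0 : Fin q := ⟨0, hq⟩ with hj0
  set dec : Fin L → (Fin (R + 1) → Fin m → Fin q) := fun ℓ a b => e.symm ℓ (a, b) with hdec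
  set Dy : (Fin n → Fin q) → Finset (Fin L) :=
    fun y => Finset.univ.filter (fun ℓ => ∀ j, M j ℓ ≠ y j) with hDy
  have hDcard : ∀ y, (Dy y).card < t := by
    intro y
    by_contra hge
    push_neg at hge
    obtain ⟨T, hTsub, hTcard⟩ := Finset.exists_subset_card_eq (s := Dy y) (n := t) hge
    obtain ⟨rr, hrr⟩ := hM T hTcard
    obtain ⟨ℓ, hℓT, hMeq⟩ := hrr (y rr)
    have hmem := hTsub hℓT
    rw [hDy] at hmem
    simp only [Finset.mem_filter] at hmem
    exact hmem.2 rr hMeq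
  set Sf : (Fin n → Fin q) → Finset (Fin (R + 1) → Fin m → Fin q) :=
    fun y => (Dy y).image dec with hSf
  have hScard : ∀ y, (Sf y).card ≤ m ^ (R + 1) := fun y =>
    le_trans Finset.card_image_le (le_trans (hDcard y).le htm)
  have hres := fun y => rescue (X := Fin m → Fin q) m R (Sf y) (hScard y)
  choose ordF φF hprot using hres
  set key : (Fin n → Fin q) → Fin L → ℕ := fun y ℓ => ordF y (dec ℓ) * L + (ℓ : ℕ) with hkey
  set smallG : (Fin (R + 1) × Fin m) → (Fin n → Fin q) → (Fin (R + 1) × Fin m → Fin q) → Fin q :=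
    fun ik y w =>
      if hZ : (((Dy y).filter (fun ℓ =>
          (∀ p : Fin (R + 1) × Fin m, p.1 ≠ ik.1 → e.symm ℓ p = w p) ∧
          φF y (dec ℓ) ik.1 = (ik.2 : ℕ))).image (key y)).Nonempty
      then e.symm ⟨Finset.min' _ hZ % L, Nat.mod_lt _ hL⟩ ik
      else j0
    with hsmallG
  refine ⟨fun v => match v with
    | Sum.inr j => fun x => M j (e (fun p => x (Sum.inl p)))
    | Sum.inl ik => fun x =>
        smallG ik (fun j => x (Sum.inr j)) (fun p => if p.1 = ik.1 then j0 else x (Sum.inl p)),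
    ?_, ?_⟩
  · -- IsHatStrategy
    intro v x x' hvis
    cases v with
    | inr j =>
      have hxx : (fun p => x (Sum.inl p)) = fun p => x' (Sum.inl p) :=
        funext fun p => hvis (Sum.inl p) trivial
      dsimp only
      rw [hxx]
    | inl ik =>
      have hy : (fun j => x (Sum.inr j)) = fun j => x' (Sum.inr j) :=
        funext fun j => hvis (Sum.inr j) trivial
      have hw : (fun p => if p.1 = ik.1 then j0 else x (Sum.inl p)) =
          (fun p => if p.1 = ik.1 then j0 else x' (Sum.inl p)) := by
        funext p
        by_cases hp : p.1 = ik.1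
        · simp [hp]
        · simp only [if_neg hp]
          exact hvis (Sum.inl p) (fun hh => hp hh.symm)
      dsimp only
      rw [hy, hw]
  · -- winning
    intro x
    by_contra hno
    push_neg at hno
    have hnoR : ∀ j, M j (e (fun p => x (Sum.inl p))) ≠ x (Sum.inr j) := fun j => hno (Sum.inr j)
    set y : Fin n → Fin q := fun j => x (Sum.inr j) with hydef
    set ℓs : Fin L := e (fun p => x (Sum.inl p)) with hℓs
    have hsymm : ∀ p, e.symm ℓs p = x (Sum.inl p) := by
      intro p
      rw [hℓs, Equiv.symm_apply_apply]
    have hℓsD : ℓs ∈ Dy y := by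
      rw [hDy]
      simp only [Finset.mem_filter, Finset.mem_univ, true_and]
      exact fun j => hnoR j
    have hcS : dec ℓs ∈ Sf y := by
      rw [hSf]
      exact Finset.mem_image_of_mem _ hℓsD
    obtain ⟨i, hφlt, hmin⟩ := hprot y (dec ℓs) hcS
    set k : Fin m := ⟨φF y (dec ℓs) i, hφlt⟩ with hkdef
    refine hno (Sum.inl (i, k)) ?_
    dsimp only
    set w : Fin (R + 1) × Fin m → Fin q :=
      fun p => if p.1 = i then j0 else x (Sum.inl p) with hwdef
    rw [hsmallG]
    dsimp only
    set Z : Finset (Fin L) := (Dy y).filter (fun ℓ =>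
        (∀ p : Fin (R + 1) × Fin m, p.1 ≠ i → e.symm ℓ p = w p) ∧
        φF y (dec ℓ) i = (k : ℕ)) with hZdef
    have hℓsZ : ℓs ∈ Z := by
      rw [hZdef, Finset.mem_filter]
      refine ⟨hℓsD, ?_, rfl⟩
      intro p hp
      rw [hsymm p, hwdef]
      simp only [if_neg hp]
    have hne : ((Z.image (key y))).Nonempty := ⟨key y ℓs, Finset.mem_image_of_mem _ hℓsZ⟩
    rw [dif_pos hne]
    obtain ⟨ℓh, hℓhZ, hkeyeq⟩ := Finset.mem_image.mp (Finset.min'_mem _ hne)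
    have hmod : (Z.image (key y)).min' hne % L = (ℓh : ℕ) := by
      rw [← hkeyeq, hkey]
      simp only []
      rw [Nat.mul_comm, Nat.mul_add_mod, Nat.mod_eq_of_lt ℓh.isLt]
    have hfin : (⟨(Z.image (key y)).min' hne % L, Nat.mod_lt _ hL⟩ : Fin L) = ℓh :=
      Fin.ext hmod
    rw [hfin]
    have hle : (Z.image (key y)).min' hne ≤ key y ℓs :=
      Finset.min'_le _ _ (Finset.mem_image_of_mem _ hℓsZ)
    have hℓheq : ℓh = ℓs := by
      by_contra hnee
      have hmemZ := Finset.mem_filter.mp (hZdef ▸ hℓhZ)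
      have h1 : dec ℓh ∈ Sf y := by
        rw [hSf]; exact Finset.mem_image_of_mem _ hmemZ.1
      have hcne : dec ℓh ≠ dec ℓs := by
        intro hdeq
        apply hnee
        apply e.symm.injective
        funext p
        have := congrFun (congrFun (hdec ▸ hdeq) p.1) p.2
        simpa using this
      have hagree : ∀ jj, jj ≠ i → dec ℓh jj = dec ℓs jj := by
        intro jj hjj
        funext b
        have hcons := hmemZ.2.1 (jj, b) hjj
        have hw2 : w (jj, b) = x (Sum.inl (jj, b)) := by
          rw [hwdef]; simp only [if_neg hjj]
        have h3 : e.symm ℓh (jj, b) = x (Sum.inl (jj, b)) := by rw [hcons, hw2]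
        rw [hdec]
        simp only []
        rw [h3, hsymm (jj, b)]
      have hφeq : φF y (dec ℓh) i = φF y (dec ℓs) i := hmemZ.2.2
      have hord := hmin (dec ℓh) h1 hcne hagree hφeq
      have hkey2 : key y ℓs < key y ℓh := by
        rw [hkey]
        simp only []
        have hv : (ℓs : ℕ) < L := ℓs.isLt
        have hstep : ordF y (dec ℓs) + 1 ≤ ordF y (dec ℓh) := hord
        calc ordF y (dec ℓs) * L + (ℓs : ℕ) < ordF y (dec ℓs) * L + L := by omega
          _ = (ordF y (dec ℓs) + 1) * L := by ring
          _ ≤ ordF y (dec ℓh) * L := Nat.mul_le_mul_right _ hstep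
          _ ≤ ordF y (dec ℓh) * L + (ℓh : ℕ) := Nat.le_add_right _ _
      rw [← hkeyeq] at hle
      omega
    rw [hℓheq]
    exact hsymm (i, k)

/-- If `r ≥ 2`, `t ≤ m^(r-1)` and there exists an `n × q^((r-1)m)` `q`-ary `t`-saturated
matrix, then the complete `r`-partite graph with `r - 1` parts of size `m` and one part of
size `n` is `q`-solvable. -/
theorem stmt18 (q m n r t : ℕ) (hq : 0 < q) (hm : 0 < m) (hn : 0 < n) (hr : 2 ≤ r)
    (ht : 0 < t) (htm : t ≤ m ^ (r - 1))
    (h : ∃ M : Matrix (Fin n) (Fin (q ^ ((r - 1) * m))) (Fin q), Saturated M t) :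
    Solvable (MultipartitePlusAdj (r - 1) m n) q := by
  obtain ⟨R, hR⟩ : ∃ R, r - 1 = R + 1 := ⟨r - 2, by omega⟩
  rw [hR] at htm h ⊢
  obtain ⟨M, hM⟩ := h
  exact core q m n R t _ hq hm htm rfl M hM
end

section
/- Let r ≥ 3, q ≥ 2 and let n_1,…,n_r and t_1,…,t_{r−1} be positive integers. Suppose that for each 1 ≤ i ≤ r−1 there exists an n_i × q^{n_{i+1}} matrix with entries in [q] that is t_i-saturated, and that ∏_{i=1}^{r−1} t_i ≤ e^{n_r/q}. Then the complete r-partite directed cycle C⃗_{n_1,…,n_r} is q-solvable. -/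
/-- colorings of part `i+1` that defeat the guess of every vertex of part `i`
when part `i` is colored by `a`. -/
def badSet {q : ℕ} {n : ℕ → ℕ}
    (M : ∀ i : ℕ, Matrix (Fin (n i)) (Fin (q ^ n (i + 1))) (Fin q))
    (i : ℕ) (a : Fin (n i) → Fin q) : Finset (Fin (n (i + 1)) → Fin q) :=
  Finset.univ.filter (fun b => ∀ j, M i j (finFunctionFinEquiv b) ≠ a j)

lemma badSet_card_lt {q : ℕ} {n : ℕ → ℕ}
    (M : ∀ i : ℕ, Matrix (Fin (n i)) (Fin (q ^ n (i + 1))) (Fin q))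
    (i t : ℕ) (hsat : Saturated (M i) t) (a : Fin (n i) → Fin q) :
    (badSet M i a).card < t := by
  by_contra hc
  push_neg at hc
  have himg : t ≤ ((badSet M i a).image finFunctionFinEquiv).card := by
    rwa [Finset.card_image_of_injective _ (Equiv.injective _)]
  obtain ⟨T, hTsub, hTcard⟩ := Finset.exists_subset_card_eq himg
  obtain ⟨rr, hrr⟩ := hsat T hTcard
  obtain ⟨col, hcolT, hcol⟩ := hrr (a rr)
  obtain ⟨b, hb, rfl⟩ := Finset.mem_image.mp (hTsub hcolT)
  exact (Finset.mem_filter.mp hb).2 rr hcol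

def chainSet {q : ℕ} {n : ℕ → ℕ}
    (M : ∀ i : ℕ, Matrix (Fin (n i)) (Fin (q ^ n (i + 1))) (Fin q))
    (x : Fin (n 1) → Fin q) : (k : ℕ) → Finset (Fin (n (k + 1)) → Fin q)
  | 0 => {x}
  | (k + 1) => (chainSet M x k).biUnion (fun a => badSet M (k + 1) a)

lemma chainSet_card {q : ℕ} {n : ℕ → ℕ}
    (M : ∀ i : ℕ, Matrix (Fin (n i)) (Fin (q ^ n (i + 1))) (Fin q))
    (x : Fin (n 1) → Fin q) (t : ℕ → ℕ) :
    ∀ k : ℕ, (∀ i a, 1 ≤ i → i ≤ k → (badSet M i a).card < t i) →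
      (chainSet M x k).card ≤ ∏ i ∈ Finset.Icc 1 k, (t i - 1) := by
  intro k
  induction k with
  | zero => intro _; simp [chainSet]
  | succ k ih =>
    intro hb
    have h1 : (chainSet M x (k+1)).card ≤
        ∑ a ∈ chainSet M x k, (badSet M (k+1) a).card :=
      Finset.card_biUnion_le
    have h2 : ∑ a ∈ chainSet M x k, (badSet M (k+1) a).card ≤
        (chainSet M x k).card • (t (k+1) - 1) := by
      apply Finset.sum_le_card_nsmul
      intro a _
      exact Nat.le_sub_one_of_lt (hb (k+1) a (by omega) (by omega))
    rw [Finset.prod_Icc_succ_top (by omega)]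
    calc (chainSet M x (k+1)).card ≤ (chainSet M x k).card • (t (k+1) - 1) := le_trans h1 h2
    _ = (chainSet M x k).card * (t (k+1) - 1) := by rw [smul_eq_mul]
    _ ≤ (∏ i ∈ Finset.Icc 1 k, (t i - 1)) * (t (k+1) - 1) :=
        Nat.mul_le_mul_right _ (ih (fun i a hi hik => hb i a hi (by omega)))

lemma coverLemma {N q : ℕ} (S : Finset (Fin N → Fin q))
    (h : S.card * (q - 1) ^ N < q ^ N) :
    ∃ g : Fin N → Fin q, ∀ y ∈ S, ∃ j, g j = y j := by
  by_contra hc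
  push_neg at hc
  have hsub : (Finset.univ : Finset (Fin N → Fin q)) ⊆
      S.biUnion (fun y => Fintype.piFinset (fun j => ({y j}ᶜ : Finset (Fin q)))) := by
    intro g _
    obtain ⟨y, hy, hgy⟩ := hc g
    exact Finset.mem_biUnion.mpr ⟨y, hy, Fintype.mem_piFinset.mpr
      (fun j => Finset.mem_compl.mpr (by simpa using hgy j))⟩
  have hcard := Finset.card_le_card hsub
  rw [Finset.card_univ, Fintype.card_fun, Fintype.card_fin, Fintype.card_fin] at hcard
  have h3 : (S.biUnion (fun y => Fintype.piFinset (fun j => ({y j}ᶜ : Finset (Fin q))))).card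
      ≤ S.card * (q - 1) ^ N := by
    refine le_trans Finset.card_biUnion_le ?_
    have : ∀ y ∈ S, (Fintype.piFinset (fun j => ({y j}ᶜ : Finset (Fin q)))).card
        ≤ (q - 1) ^ N := by
      intro y _
      rw [Fintype.card_piFinset]
      apply le_of_eq
      rw [Finset.prod_congr rfl (fun j _ => by
        rw [Finset.card_compl, Finset.card_singleton, Fintype.card_fin])]
      simp
    calc ∑ y ∈ S, (Fintype.piFinset (fun j => ({y j}ᶜ : Finset (Fin q)))).card
        ≤ S.card • ((q-1)^N) := Finset.sum_le_card_nsmul _ _ _ this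
      _ = S.card * (q-1)^N := by rw [smul_eq_mul]
  exact absurd (le_trans hcard h3) (not_le.mpr h)

lemma prodBound {q N P : ℕ} (hq : 2 ≤ q) (hP : (P : ℝ) ≤ Real.exp ((N : ℝ) / q)) :
    P * (q - 1) ^ N ≤ q ^ N := by
  have hq1 : (1:ℝ) ≤ (q:ℝ) := by exact_mod_cast Nat.one_le_of_lt hq
  have hqpos : (0:ℝ) < (q:ℝ) := by linarith
  have hq1pos : (0:ℝ) < (q:ℝ) - 1 := by
    have : (2:ℝ) ≤ (q:ℝ) := by exact_mod_cast hq
    linarith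
  -- exp (1/q) ≤ q / (q-1)
  have key : Real.exp (1/(q:ℝ)) * (1 - 1/(q:ℝ)) ≤ 1 := by
    have h1 : (1 - 1/(q:ℝ)) ≤ Real.exp (-(1/(q:ℝ))) := by
      have := Real.add_one_le_exp (-(1/(q:ℝ))); linarith
    calc Real.exp (1/(q:ℝ)) * (1 - 1/(q:ℝ))
        ≤ Real.exp (1/(q:ℝ)) * Real.exp (-(1/(q:ℝ))) :=
          mul_le_mul_of_nonneg_left h1 (Real.exp_pos _).le
      _ = 1 := by rw [← Real.exp_add]; simp
  have hexp : Real.exp (1 / (q:ℝ)) ≤ (q:ℝ) / ((q:ℝ) - 1) := by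
    rw [le_div_iff₀ hq1pos]
    have hrw : ((q:ℝ) - 1) = (1 - 1/(q:ℝ)) * q := by field_simp
    rw [hrw, ← mul_assoc]
    calc Real.exp (1/(q:ℝ)) * (1 - 1/(q:ℝ)) * q ≤ 1 * q :=
          mul_le_mul_of_nonneg_right key hqpos.le
      _ = q := one_mul _
  -- exp (N/q) ≤ (q/(q-1))^N
  have hexpN : Real.exp ((N:ℝ) / (q:ℝ)) ≤ ((q:ℝ) / ((q:ℝ) - 1)) ^ N := by
    have : (N:ℝ) / (q:ℝ) = (N:ℝ) * (1/(q:ℝ)) := by ring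
    rw [this, Real.exp_nat_mul]
    exact pow_le_pow_left₀ (le_of_lt (Real.exp_pos _)) hexp N
  have hmain : (P:ℝ) * ((q:ℝ) - 1) ^ N ≤ (q:ℝ) ^ N := by
    have hP2 : (P:ℝ) ≤ ((q:ℝ) / ((q:ℝ) - 1)) ^ N := le_trans hP hexpN
    have := mul_le_mul_of_nonneg_right hP2 (pow_nonneg (le_of_lt hq1pos) N)
    calc (P:ℝ) * ((q:ℝ)-1)^N ≤ ((q:ℝ)/((q:ℝ)-1))^N * ((q:ℝ)-1)^N := this
      _ = (q:ℝ)^N := by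
          rw [← mul_pow]
          congr 1
          field_simp
  have : ((P * (q-1)^N : ℕ) : ℝ) ≤ (((q:ℕ)^N : ℕ) : ℝ) := by
    push_cast
    rw [Nat.cast_sub (by omega : 1 ≤ q)]
    push_cast
    exact hmain
  exact_mod_cast this

lemma badSet_mem {q : ℕ} {n : ℕ → ℕ}
    (M : ∀ i : ℕ, Matrix (Fin (n i)) (Fin (q ^ n (i + 1))) (Fin q))
    (i : ℕ) (a : Fin (n i) → Fin q) (b : Fin (n (i + 1)) → Fin q) :
    b ∈ badSet M i a ↔ ∀ j, M i j (finFunctionFinEquiv b) ≠ a j := by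
  simp [badSet]

lemma prod_sub_one_le (t : ℕ → ℕ) : ∀ k, 1 ≤ k → (∀ i, 1 ≤ i → i ≤ k → 1 ≤ t i) →
    ∏ i ∈ Finset.Icc 1 k, (t i - 1) ≤ (∏ i ∈ Finset.Icc 1 k, t i) - 1 := by
  intro k
  induction k with
  | zero => omega
  | succ k ih =>
    intro _ hpos
    rcases Nat.eq_zero_or_pos k with rfl | hk
    · simp
    · rw [Finset.prod_Icc_succ_top (by omega), Finset.prod_Icc_succ_top (by omega)]
      have h1 := ih hk (fun i a b => hpos i a (by omega))
      have hP : 0 < ∏ i ∈ Finset.Icc 1 k, t i :=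
        Finset.prod_pos (fun i hi =>
          hpos i (Finset.mem_Icc.mp hi).1 (by have := (Finset.mem_Icc.mp hi).2; omega))
      have htk : 1 ≤ t (k + 1) := hpos (k + 1) (by omega) le_rfl
      obtain ⟨P', hP'⟩ : ∃ P', ∏ i ∈ Finset.Icc 1 k, t i = P' + 1 :=
        ⟨_, (Nat.succ_pred_eq_of_pos hP).symm⟩
      obtain ⟨b', hb'⟩ : ∃ b', t (k + 1) = b' + 1 :=
        ⟨_, (Nat.succ_pred_eq_of_pos htk).symm⟩
      rw [hP'] at h1
      rw [hP', hb']
      have ha : ∏ i ∈ Finset.Icc 1 k, (t i - 1) ≤ P' := by omega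
      have hExp : (P' + 1) * (b' + 1) = P' * b' + P' + b' + 1 := by ring
      calc (∏ i ∈ Finset.Icc 1 k, (t i - 1)) * (b' + 1 - 1)
          ≤ P' * b' := by
            have : b' + 1 - 1 = b' := by omega
            rw [this]
            exact Nat.mul_le_mul_right _ ha
        _ ≤ (P' + 1) * (b' + 1) - 1 := by omega

/-- If for each `1 ≤ i ≤ r - 1` there is an `nᵢ × q^(n_{i+1})` `q`-ary `tᵢ`-saturated matrix,
and `∏_{i=1}^{r-1} tᵢ ≤ e^(n_r / q)`, then the complete `r`-partite directed cycle
`C⃗_{n₁,…,n_r}` is `q`-solvable.  The part with `Fin r`-index `i` (zero-based) is part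
number `i + 1`, and every vertex of part `i` sees every vertex of part `i + 1`
(cyclically). -/
theorem stmt19 (r q : ℕ) (hr : 3 ≤ r) (hq : 2 ≤ q) (n t : ℕ → ℕ)
    (hn : ∀ i, 1 ≤ i → i ≤ r → 0 < n i) (ht : ∀ i, 1 ≤ i → i ≤ r - 1 → 0 < t i)
    (hsat : ∀ i, 1 ≤ i → i ≤ r - 1 →
      ∃ M : Matrix (Fin (n i)) (Fin (q ^ n (i + 1))) (Fin q), Saturated M (t i))
    (hprod : (∏ i ∈ Finset.Icc 1 (r - 1), (t i : ℝ)) ≤ Real.exp ((n r : ℝ) / q)) :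
    Solvable (fun v w : (Σ i : Fin r, Fin (n ((i : ℕ) + 1))) =>
      (w.1 : ℕ) = ((v.1 : ℕ) + 1) % r) q := by
  obtain ⟨r', rfl⟩ : ∃ r', r = r' + 1 := ⟨r - 1, by omega⟩
  have hr' : 2 ≤ r' := by omega
  simp only [Nat.add_sub_cancel] at ht hsat hprod
  -- choose the matrices, with junk values out of range
  obtain ⟨M, hMsat⟩ : ∃ M : ∀ i : ℕ, Matrix (Fin (n i)) (Fin (q ^ n (i + 1))) (Fin q),
      ∀ i, 1 ≤ i → i ≤ r' → Saturated (M i) (t i) := by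
    choose f hf using hsat
    exact ⟨fun i => if h : 1 ≤ i ∧ i ≤ r' then f i h.1 h.2 else fun _ _ => ⟨0, by omega⟩,
      fun i h1 h2 => by simp only [dif_pos (⟨h1, h2⟩ : 1 ≤ i ∧ i ≤ r')]; convert hf i h1 h2; exact dif_pos ⟨h1, h2⟩⟩
  have hbadlt : ∀ i a, 1 ≤ i → i ≤ r' → (badSet M i a).card < t i :=
    fun i a h1 h2 => badSet_card_lt M i (t i) (hMsat i h1 h2) a
  -- the chain-set at level r' is small
  have hchain : ∀ x1 : Fin (n 1) → Fin q,
      (chainSet M x1 r').card * (q - 1) ^ (n (r' + 1)) < q ^ (n (r' + 1)) := by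
    intro x1
    have h1 : (chainSet M x1 r').card ≤ ∏ i ∈ Finset.Icc 1 r', (t i - 1) :=
      chainSet_card M x1 t r' (fun i a hi hik => hbadlt i a hi hik)
    have hP : 0 < ∏ i ∈ Finset.Icc 1 r', t i :=
      Finset.prod_pos (fun i hi =>
        ht i (Finset.mem_Icc.mp hi).1 (Finset.mem_Icc.mp hi).2)
    have h2 : ∏ i ∈ Finset.Icc 1 r', (t i - 1) ≤ (∏ i ∈ Finset.Icc 1 r', t i) - 1 :=
      prod_sub_one_le t r' (by omega)
        (fun i hi hik => ht i hi hik)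
    have h3 : (∏ i ∈ Finset.Icc 1 r', t i) * (q - 1) ^ (n (r' + 1)) ≤ q ^ (n (r' + 1)) := by
      apply prodBound hq
      rw [Nat.cast_prod]
      exact hprod
    have hA : 0 < (q - 1) ^ (n (r' + 1)) := Nat.pow_pos (by omega)
    calc (chainSet M x1 r').card * (q - 1) ^ (n (r' + 1))
        ≤ ((∏ i ∈ Finset.Icc 1 r', t i) - 1) * (q - 1) ^ (n (r' + 1)) :=
          Nat.mul_le_mul_right _ (le_trans h1 h2)
      _ < (∏ i ∈ Finset.Icc 1 r', t i) * (q - 1) ^ (n (r' + 1)) :=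
          (Nat.mul_lt_mul_right hA).mpr (by omega)
      _ ≤ q ^ (n (r' + 1)) := h3
  -- choose the guess for the last part
  obtain ⟨G, hG⟩ : ∃ G : (Fin (n 1) → Fin q) → (Fin (n (r' + 1)) → Fin q),
      ∀ x1, ∀ y ∈ chainSet M x1 r', ∃ j, G x1 j = y j :=
    ⟨fun x1 => (coverLemma (chainSet M x1 r') (hchain x1)).choose,
     fun x1 => (coverLemma (chainSet M x1 r') (hchain x1)).choose_spec⟩
  refine ⟨fun v => fun x => if h : (v.1 : ℕ) + 1 < r' + 1 then
      M ((v.1 : ℕ) + 1) v.2 (finFunctionFinEquiv (fun k => x ⟨⟨(v.1 : ℕ) + 1, h⟩, k⟩))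
    else G (fun k => x ⟨⟨0, Nat.succ_pos r'⟩, k⟩)
      (Fin.cast (congrArg n (by have := v.1.isLt; omega : (v.1 : ℕ) + 1 = r' + 1)) v.2),
    ?_, ?_⟩
  · -- it is a hat strategy
    intro v x y hxy
    by_cases h : (v.1 : ℕ) + 1 < r' + 1
    · simp only [dif_pos h]
      have he : (fun k => x ⟨⟨(v.1 : ℕ) + 1, h⟩, k⟩) =
          (fun k => y ⟨⟨(v.1 : ℕ) + 1, h⟩, k⟩) := by
        funext k
        exact hxy ⟨⟨(v.1 : ℕ) + 1, h⟩, k⟩ (Nat.mod_eq_of_lt h).symm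
      rw [he]
    · simp only [dif_neg h]
      have he : (fun k => x ⟨⟨0, Nat.succ_pos r'⟩, k⟩) =
          (fun k => y ⟨⟨0, Nat.succ_pos r'⟩, k⟩) := by
        funext k
        apply hxy ⟨⟨0, Nat.succ_pos r'⟩, k⟩
        show (0 : ℕ) = ((v.1 : ℕ) + 1) % (r' + 1)
        have h2 : (v.1 : ℕ) + 1 = r' + 1 := by have := v.1.isLt; omega
        rw [h2, Nat.mod_self]
      rw [he]
  · -- it wins
    intro x
    by_contra hcon
    push_neg at hcon
    have key : ∀ k, ∀ hk : k < r' + 1, k ≤ r' →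
        (fun j => x ⟨⟨k, hk⟩, j⟩) ∈
          chainSet M (fun j => x ⟨⟨0, Nat.succ_pos r'⟩, j⟩) k := by
      intro k
      induction k with
      | zero =>
        intro hk _
        simp only [chainSet, Finset.mem_singleton]
      | succ k ih =>
        intro hk hkr
        simp only [chainSet]
        rw [Finset.mem_biUnion]
        refine ⟨fun j => x ⟨⟨k, by omega⟩, j⟩, ih (by omega) (by omega), ?_⟩
        rw [badSet_mem]
        intro j hj
        refine hcon ⟨⟨k, by omega⟩, j⟩ ?_
        have hc : ((⟨k, by omega⟩ : Fin (r' + 1)) : ℕ) + 1 < r' + 1 := by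
          simp only []; omega
        rw [dif_pos hc]
        exact hj
    have hyr := key r' (Nat.lt_succ_self r') le_rfl
    obtain ⟨j, hj⟩ := hG (fun j => x ⟨⟨0, Nat.succ_pos r'⟩, j⟩) _ hyr
    refine absurd ?_ (hcon ⟨⟨r', Nat.lt_succ_self r'⟩, j⟩)
    rw [dif_neg (show ¬ (((⟨r', Nat.lt_succ_self r'⟩ : Fin (r' + 1)) : ℕ) + 1 < r' + 1) by
      simp only []; omega)]
    exact hj
end
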